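/- arXiv:2106.11349 — 8 statements merged into one kernel-verified Lean document; each statement's English description precedes it below -/
import Mathlib

section
/- Let σ₁ = b₁⊗α₁ − 1 and σ₂ = b₂⊗α₂ − 1 be two distinct nontrivial involutions in SL(3,ℝ) (with α₁(b₁) = α₂(b₂) = 2), and let p ≥ 2 be an integer. Then (σ₁σ₂)^p = 1 if and only if both of the following hold: (a) there is an integer q with 1 ≤ q ≤ p/2 such that α₁(b₂)·α₂(b₁) = 4cos²(qπ/p); (b) α₁(b₂) = 0 if and only if α₂(b₁) = 0. -/
/-!
Write `x = α₁(b₂)`, `y = α₂(b₁)`. Then `σ₁σ₂ = 1 + L A`, where `A v = (α₁ v, α₂ v)` and `L` has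
columns `-b₁` and `x b₁ - b₂`, and `A L + 1 = C := [[-1, x], [-y, xy - 1]]`, a matrix of
determinant `1` and trace `xy - 2`. When `det (A L) = 4 - xy ≠ 0`, the push-through identity
`(1 + L A)^p - 1 = L (∑_{i<p} (1 + A L)^i) A` shows `(σ₁σ₂)^p = 1 ↔ C^p = 1`. Over `ℂ` the matrix
`C` is annihilated by `(X - μ)(X - μ⁻¹)` with `μ + μ⁻¹ = tr C`, so `C^p = 1` forces `μ` to be a
`p`-th root of unity, i.e. `tr C = 2 cos (2πq/p)`, and conversely distinct roots of unity give
`C^p = 1`; `4 cos² (qπ/p) = 2 + 2 cos (2πq/p)` turns this into condition (a). The remaining cases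
(`xy = 4`, where `L A` is nilpotent, and exactly one of `x`, `y` zero, where `-C` is unipotent)
are excluded because in characteristic zero a unipotent element of finite order is trivial.
-/

open Matrix Real Finset

open Polynomial in
theorem IsNilpotent.eq_zero_of_add_one_pow_eq_one {R : Type*} [Ring R] [Algebra ℚ R] {N : R}
    (hN : IsNilpotent N) {p : ℕ} (hp : p ≠ 0) (h : (N + 1) ^ p = 1) : N = 0 := by
  set P : ℤ[X] := ∑ i ∈ range p, (X + 1) ^ i
  obtain ⟨Q, hQ⟩ : X ∣ P - C (p : ℤ) := by
    simpa [P, coeff_zero_eq_eval_zero, eval_finsetSum] using X_dvd_sub_C (p := P)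
  have hcomm : Commute N (aeval N Q) := by
    simpa using (Commute.all X Q).map (aeval N)
  have hP : aeval N P = p + N * aeval N Q := by
    simpa [sub_eq_iff_eq_add'] using congrArg (aeval N) hQ
  have hp : IsUnit (p : R) := by
    simpa using (Nat.cast_ne_zero.2 hp : (p : ℚ) ≠ 0).isUnit.map (algebraMap ℚ R)
  have hunit : IsUnit (aeval N P) :=
    hP ▸ (hcomm.isNilpotent_mul_right hN).isUnit_add_left_of_commute hp (Nat.cast_commute _ _).symm
  have hPN : aeval N P * N = 0 := by
    simpa [P, h] using geom_sum_mul_add N p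
  exact hunit.mul_right_eq_zero.1 hPN

namespace Matrix

variable {R m n : Type*} [CommRing R] [Fintype m] [Fintype n] [DecidableEq m] [DecidableEq n]

theorem add_one_pow_mul_eq_mul_add_one_pow (L : Matrix n m R) (A : Matrix m n R) (k : ℕ) :
    (L * A + 1) ^ k * L = L * (A * L + 1) ^ k := by
  induction k with
  | zero => simp
  | succ k ih =>
    have hL : (L * A + 1) * L = L * (A * L + 1) := by
      rw [Matrix.add_mul, Matrix.mul_add, Matrix.mul_assoc, Matrix.one_mul, Matrix.mul_one]
    rw [pow_succ, Matrix.mul_assoc, hL, ← Matrix.mul_assoc, ih, Matrix.mul_assoc, ← pow_succ]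

theorem add_one_pow_sub_one_eq_mul_geom_sum_mul (L : Matrix n m R) (A : Matrix m n R) (p : ℕ) :
    (L * A + 1) ^ p - 1 = L * (∑ i ∈ range p, (A * L + 1) ^ i) * A := by
  rw [← geom_sum_mul_add (L * A) p, add_sub_cancel_right, Matrix.mul_sum, Finset.sum_mul,
    Matrix.sum_mul]
  refine Finset.sum_congr rfl fun i _ => ?_
  rw [← Matrix.mul_assoc, add_one_pow_mul_eq_mul_add_one_pow]

theorem add_one_pow_eq_one_iff_of_isUnit {L : Matrix n m R} {A : Matrix m n R}
    (hAL : IsUnit (A * L)) (p : ℕ) :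
    (L * A + 1) ^ p = 1 ↔ (A * L + 1) ^ p = 1 := by
  have hS : (L * A + 1) ^ p = 1 ↔ ∑ i ∈ range p, (A * L + 1) ^ i = 0 := by
    rw [← sub_eq_zero, add_one_pow_sub_one_eq_mul_geom_sum_mul]
    refine ⟨fun h => ?_, fun h => by rw [h, Matrix.mul_zero, Matrix.zero_mul]⟩
    have : A * L * (∑ i ∈ range p, (A * L + 1) ^ i) * (A * L) = 0 := by
      simpa [Matrix.mul_assoc] using congrArg (fun X => A * X * L) h
    rwa [hAL.mul_left_eq_zero, hAL.mul_right_eq_zero] at this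
  rw [hS, ← geom_sum_mul_add (A * L) p, add_eq_right, hAL.mul_left_eq_zero]

end Matrix

section ComplexAlgebra

variable {A : Type*} [Ring A] [Algebra ℂ A] {a : A} {μ ν : ℂ} {p : ℕ}

theorem pow_mul_eq_smul_of_mul_eq_smul {w : A} (h : a * w = μ • w) (n : ℕ) :
    a ^ n * w = μ ^ n • w := by
  induction n with
  | zero => simp
  | succ n ih => rw [pow_succ', mul_assoc, ih, mul_smul_comm, h, smul_smul, pow_succ]

theorem mul_sub_algebraMap_eq_smul (h : (a - algebraMap ℂ A μ) * (a - algebraMap ℂ A ν) = 0) :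
    a * (a - algebraMap ℂ A ν) = μ • (a - algebraMap ℂ A ν) := by
  rwa [Algebra.smul_def, ← sub_eq_zero, ← sub_mul]

theorem pow_eq_one_of_sub_mul_sub_eq_zero
    (h : (a - algebraMap ℂ A μ) * (a - algebraMap ℂ A ν) = 0)
    (hμν : μ ≠ ν) (hμ : μ ^ p = 1) (hν : ν ^ p = 1) : a ^ p = 1 := by
  have hcomm : Commute (a - algebraMap ℂ A μ) (a - algebraMap ℂ A ν) :=
    ((Commute.refl a).sub_right (Algebra.commute_algebraMap_right ν a)).sub_left
      (Algebra.commute_algebraMap_left μ _)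
  have eμ := pow_mul_eq_smul_of_mul_eq_smul (mul_sub_algebraMap_eq_smul h) p
  have eν := pow_mul_eq_smul_of_mul_eq_smul (mul_sub_algebraMap_eq_smul (hcomm.eq ▸ h)) p
  rw [hμ, one_smul] at eμ
  rw [hν, one_smul] at eν
  have hdiff : algebraMap ℂ A (μ - ν) = (a - algebraMap ℂ A ν) - (a - algebraMap ℂ A μ) := by
    rw [map_sub]; abel
  -- `a ^ p` fixes both `a - ν` and `a - μ`, whose difference is the invertible scalar `μ - ν`.
  refine smul_right_injective A (sub_ne_zero.2 hμν) (?_ : (μ - ν) • a ^ p = (μ - ν) • 1)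
  rw [Algebra.smul_def, Algebra.commutes, hdiff, mul_sub, eμ, eν, ← hdiff, Algebra.smul_def,
    mul_one]

theorem scalar_pow_eq_one_of_sub_mul_sub_eq_zero [Nontrivial A]
    (h : (a - algebraMap ℂ A μ) * (a - algebraMap ℂ A ν) = 0) (hμν : μ * ν = 1)
    (ha : a ^ p = 1) : μ ^ p = 1 := by
  have e : (μ ^ p - 1) • (a - algebraMap ℂ A ν) = 0 := by
    rw [sub_smul, one_smul, ← pow_mul_eq_smul_of_mul_eq_smul (mul_sub_algebraMap_eq_smul h), ha,
      one_mul, sub_self]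
  rcases smul_eq_zero.1 e with hμ | ha_eq
  · exact sub_eq_zero.1 hμ
  · have hν : ν ^ p = 1 := by
      apply (algebraMap ℂ A).injective
      rw [map_pow, ← sub_eq_zero.1 ha_eq, ha, map_one]
    calc μ ^ p = (μ * ν) ^ p := by rw [mul_pow, hν, mul_one]
      _ = 1 := by rw [hμν, one_pow]

end ComplexAlgebra

theorem Real.sin_nat_mul_pi_div_pos {m p : ℕ} (hm : 0 < m) (hmp : m < p) :
    0 < sin (m * π / p) := by
  have hp : (0 : ℝ) < p := by exact_mod_cast hm.trans hmp
  refine sin_pos_of_pos_of_lt_pi (by positivity) ?_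
  rw [div_lt_iff₀ hp]
  have : (m : ℝ) < p := by exact_mod_cast hmp
  nlinarith [pi_pos]

theorem Complex.exists_add_inv_eq_two_mul_cos {μ : ℂ} {p : ℕ} (hp : p ≠ 0) (hμ : μ ^ p = 1) :
    ∃ q : ℕ, 2 * q ≤ p ∧ μ + μ⁻¹ = 2 * Real.cos (2 * π * q / p) := by
  have : NeZero p := ⟨hp⟩
  obtain ⟨k, hk, rfl⟩ := (Complex.isPrimitiveRoot_exp p hp).eq_pow_of_pow_eq_one hμ
  have hcos : Complex.exp (2 * π * Complex.I / p) ^ k + (Complex.exp (2 * π * Complex.I / p) ^ k)⁻¹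
      = 2 * Real.cos (2 * π * k / p) := by
    rw [← Complex.exp_nat_mul, ← Complex.exp_neg, Complex.ofReal_cos, Complex.two_cos]
    push_cast
    ring_nf
  rcases le_or_gt (2 * k) p with hkp | hkp
  · exact ⟨k, hkp, hcos⟩
  · refine ⟨p - k, by omega, ?_⟩
    rw [hcos, Nat.cast_sub hk.le, ← Real.cos_two_pi_sub]
    congr 3
    field_simp

namespace Matrix

theorem map_ofReal_pow {n : Type*} [Fintype n] [DecidableEq n] (C : Matrix n n ℝ) (p : ℕ) :
    (C ^ p).map Complex.ofReal = C.map Complex.ofReal ^ p :=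
  map_pow Complex.ofRealHom.mapMatrix C p

theorem map_sub_mul_map_sub_eq_zero {C : Matrix (Fin 2) (Fin 2) ℝ} (hdet : C.det = 1)
    {μ ν : ℂ} (hsum : μ + ν = C.trace) (hprod : μ * ν = 1) :
    (C.map Complex.ofReal - algebraMap ℂ _ μ) * (C.map Complex.ofReal - algebraMap ℂ _ ν) = 0 := by
  rw [det_fin_two] at hdet
  rw [trace_fin_two] at hsum
  have hdet' : (C 0 0 : ℂ) * C 1 1 - C 0 1 * C 1 0 = 1 := by exact_mod_cast hdet
  push_cast at hsum
  ext i j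
  fin_cases i <;> fin_cases j <;> simp [Matrix.mul_apply, Fin.sum_univ_two, algebraMap_eq_diagonal]
  · linear_combination -(C 0 0 : ℂ) * hsum + hprod - hdet'
  · linear_combination -(C 0 1 : ℂ) * hsum
  · linear_combination -(C 1 0 : ℂ) * hsum
  · linear_combination -(C 1 1 : ℂ) * hsum + hprod - hdet'

theorem exists_trace_eq_two_mul_cos_of_pow_eq_one {C : Matrix (Fin 2) (Fin 2) ℝ}
    (hdet : C.det = 1) {p : ℕ} (hp : p ≠ 0) (hC : C ^ p = 1) :
    ∃ q : ℕ, 2 * q ≤ p ∧ C.trace = 2 * cos (2 * π * q / p) := by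
  obtain ⟨μ, hμ⟩ : ∃ μ : ℂ, 1 * (μ * μ) + (-C.trace) * μ + 1 = 0 :=
    exists_quadratic_eq_zero one_ne_zero (IsAlgClosed.exists_eq_mul_self _)
  have hprod : μ * (C.trace - μ) = 1 := by linear_combination -hμ
  have hμp : μ ^ p = 1 := by
    refine scalar_pow_eq_one_of_sub_mul_sub_eq_zero
      (map_sub_mul_map_sub_eq_zero hdet (add_sub_cancel _ _) hprod) hprod ?_
    rw [← map_ofReal_pow, hC, Matrix.map_one _ Complex.ofReal_zero Complex.ofReal_one]
  obtain ⟨q, hq, hcos⟩ := Complex.exists_add_inv_eq_two_mul_cos hp hμp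
  refine ⟨q, hq, ?_⟩
  rw [inv_eq_of_mul_eq_one_right hprod, add_sub_cancel] at hcos
  exact_mod_cast hcos

theorem pow_eq_one_of_trace_eq_two_mul_cos {C : Matrix (Fin 2) (Fin 2) ℝ}
    (hdet : C.det = 1) {p q : ℕ} (hq : 0 < q) (hqp : 2 * q < p)
    (htr : C.trace = 2 * cos (2 * π * q / p)) : C ^ p = 1 := by
  set θ := 2 * π * q / p
  have hsin : 0 < sin θ := by
    convert Real.sin_nat_mul_pi_div_pos (by omega) hqp using 2
    push_cast
    ring
  set μ := Complex.exp (θ * Complex.I)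
  set ν := Complex.exp (↑(-θ) * Complex.I)
  have hsum : μ + ν = C.trace := by
    rw [htr, Complex.ofReal_mul, Complex.ofReal_ofNat, Complex.ofReal_cos, Complex.two_cos,
      ← Complex.ofReal_neg]
  have hprod : μ * ν = 1 := by
    rw [← Complex.exp_add, Complex.ofReal_neg, neg_mul, add_neg_cancel, Complex.exp_zero]
  have hμν : μ ≠ ν := fun h => by
    have := congrArg Complex.im h
    rw [Complex.exp_ofReal_mul_I_im, Complex.exp_ofReal_mul_I_im, sin_neg] at this
    linarith
  have hμ : μ ^ p = 1 := by
    rw [← Complex.exp_nat_mul, ← Complex.exp_nat_mul_two_pi_mul_I q]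
    congr 1
    have : (p : ℂ) ≠ 0 := by exact_mod_cast (by omega : p ≠ 0)
    simp only [θ]
    push_cast
    field_simp
  have hν : ν ^ p = 1 := by rw [← inv_eq_of_mul_eq_one_right hprod, inv_pow, hμ, inv_one]
  apply Matrix.map_injective Complex.ofReal_injective
  dsimp only
  rw [map_ofReal_pow, Matrix.map_one _ Complex.ofReal_zero Complex.ofReal_one]
  exact pow_eq_one_of_sub_mul_sub_eq_zero (map_sub_mul_map_sub_eq_zero hdet hsum hprod) hμν hμ hν

theorem eq_zero_iff_eq_zero_of_pow_eq_one {x y : ℝ} {p : ℕ} (hp : p ≠ 0)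
    (hC : !![-1, x; -y, x * y - 1] ^ p = 1) : x = 0 ↔ y = 0 := by
  by_contra hne
  have hxy : x * y = 0 := by
    by_cases hx : x = 0 <;> simp_all
  set C : Matrix (Fin 2) (Fin 2) ℝ := !![-1, x; -y, x * y - 1]
  have hN : IsNilpotent (-C - 1) := ⟨2, by
    ext i j
    fin_cases i <;> fin_cases j <;>
      simp [C, sq, Matrix.mul_apply, Fin.sum_univ_two, hxy, mul_comm y x]⟩
  have h0 := hN.eq_zero_of_add_one_pow_eq_one (by omega : 2 * p ≠ 0)
    (by rw [sub_add_cancel, Even.neg_pow (even_two_mul p), pow_mul', hC, one_pow])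
  have hx : x = 0 := by simpa [C] using congrFun (congrFun h0 0) 1
  have hy : y = 0 := by simpa [C] using congrFun (congrFun h0 1) 0
  exact hne (iff_of_true hx hy)

theorem pow_eq_one_iff_of_mul_ne_four {x y : ℝ} (hxy : x * y ≠ 4) {p : ℕ} (hp : p ≠ 0) :
    !![-1, x; -y, x * y - 1] ^ p = 1 ↔
      (∃ q : ℕ, 1 ≤ q ∧ 2 * q ≤ p ∧ x * y = 4 * cos (q * π / p) ^ 2) ∧ (x = 0 ↔ y = 0) := by
  set C : Matrix (Fin 2) (Fin 2) ℝ := !![-1, x; -y, x * y - 1]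
  have hdet : C.det = 1 := by rw [det_fin_two_of]; ring
  have htr : C.trace = x * y - 2 := by rw [trace_fin_two_of]; ring
  have hcos_sq (q : ℕ) : 4 * cos (q * π / p) ^ 2 = 2 * cos (2 * π * q / p) + 2 := by
    rw [cos_sq]; ring_nf
  constructor
  · intro hC
    refine ⟨?_, eq_zero_iff_eq_zero_of_pow_eq_one hp hC⟩
    obtain ⟨q, hqp, hq⟩ := exists_trace_eq_two_mul_cos_of_pow_eq_one hdet hp hC
    refine ⟨q, Nat.one_le_iff_ne_zero.2 fun h0 => hxy ?_, hqp, by linarith [hcos_sq q]⟩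
    subst h0
    simp only [CharP.cast_eq_zero, mul_zero, zero_div, cos_zero, mul_one] at hq
    linarith
  · rintro ⟨⟨q, hq1, hqp, hq⟩, hxy0⟩
    rcases hqp.lt_or_eq with hqp | hqp
    · exact pow_eq_one_of_trace_eq_two_mul_cos hdet hq1 hqp (by rw [htr]; linarith [hcos_sq q])
    · have hcos : cos (q * π / p) = 0 := by
        rw [← hqp, ← cos_pi_div_two]
        congr 1
        push_cast
        field_simp
      have hx : x = 0 ∧ y = 0 := by
        rw [hcos] at hq
        rcases (by simpa using hq : x = 0 ∨ y = 0) with hx | hy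
        · exact ⟨hx, hxy0.1 hx⟩
        · exact ⟨hxy0.2 hy, hy⟩
      have hC : C = -1 := by
        ext i j
        fin_cases i <;> fin_cases j <;> simp [C, hx.1, hx.2]
      rw [hC, ← hqp, Even.neg_one_pow (even_two_mul q)]

theorem sub_one_sq_eq_zero_of_mul_eq_four {x y : ℝ} (hxy : x * y = 4) :
    (!![-1, x; -y, x * y - 1] - 1) ^ 2 = 0 := by
  rw [sq]
  ext i j
  fin_cases i <;> fin_cases j <;> simp [Matrix.mul_apply, Fin.sum_univ_two]
  · linear_combination -hxy
  · linear_combination x * hxy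
  · linear_combination -y * hxy
  · linear_combination (x * y - 1) * hxy

end Matrix

section Involutions

variable {R n : Type*} [CommRing R] [Fintype n]

theorem vecMulVec_sub_one_mul_self [DecidableEq n] {b α : n → R} (h : α ⬝ᵥ b = 2) :
    (vecMulVec b α - 1) * (vecMulVec b α - 1) = 1 := by
  rw [sub_mul, mul_sub, mul_sub, mul_one, one_mul, one_mul, vecMulVec_mul_vecMulVec, h, two_smul,
    vecMulVec_add]
  abel

theorem vecMulVec_sub_one_mul_vecMulVec_sub_one [DecidableEq n] (b₁ α₁ b₂ α₂ : n → R) :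
    (vecMulVec b₁ α₁ - 1) * (vecMulVec b₂ α₂ - 1) =
      (of ![-b₁, (α₁ ⬝ᵥ b₂) • b₁ - b₂])ᵀ * of ![α₁, α₂] + 1 := by
  rw [sub_mul, mul_sub, mul_sub, vecMulVec_mul_vecMulVec]
  ext i j
  simp [Matrix.mul_apply, Fin.sum_univ_two, vecMulVec_apply]
  ring

theorem of_mul_transpose_of {b₁ α₁ b₂ α₂ : n → R} (h₁ : α₁ ⬝ᵥ b₁ = 2) (h₂ : α₂ ⬝ᵥ b₂ = 2) :
    of ![α₁, α₂] * (of ![-b₁, (α₁ ⬝ᵥ b₂) • b₁ - b₂])ᵀ =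
      !![-1, α₁ ⬝ᵥ b₂; -(α₂ ⬝ᵥ b₁), (α₁ ⬝ᵥ b₂) * (α₂ ⬝ᵥ b₁) - 1] - 1 := by
  have hcol : ∀ j, (fun k => (of ![-b₁, (α₁ ⬝ᵥ b₂) • b₁ - b₂])ᵀ k j) =
      ![-b₁, (α₁ ⬝ᵥ b₂) • b₁ - b₂] j := fun j => rfl
  have hrow : ∀ i, of ![α₁, α₂] i = ![α₁, α₂] i := fun _ => rfl
  ext i j
  rw [Matrix.mul_apply', hcol]
  fin_cases i <;> fin_cases j <;>
    simp [hrow, dotProduct_sub, dotProduct_smul, h₁, h₂] <;> ring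

end Involutions

/-- For two distinct nontrivial involutions `σ₁ = b₁⊗α₁ − 1` and
`σ₂ = b₂⊗α₂ − 1` in `SL(3,ℝ)` (with `α₁(b₁) = α₂(b₂) = 2`) and an integer `p ≥ 2`,
one has `(σ₁σ₂)^p = 1` if and only if `α₁(b₂)·α₂(b₁) = 4cos²(qπ/p)` for some integer
`1 ≤ q ≤ p/2`, and `α₁(b₂)` and `α₂(b₁)` are either both zero or both nonzero. -/
theorem involutions_product_order
    (b₁ α₁ b₂ α₂ : Fin 3 → ℝ)
    (h₁ : (∑ k, α₁ k * b₁ k) = 2) (h₂ : (∑ k, α₂ k * b₂ k) = 2)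
    (σ₁ σ₂ : Matrix (Fin 3) (Fin 3) ℝ)
    (hσ₁ : σ₁ = Matrix.vecMulVec b₁ α₁ - 1) (hσ₂ : σ₂ = Matrix.vecMulVec b₂ α₂ - 1)
    (hne : σ₁ ≠ σ₂) (p : ℕ) (hp : 2 ≤ p) :
    (σ₁ * σ₂) ^ p = 1 ↔
      ((∃ q : ℕ, 1 ≤ q ∧ 2 * q ≤ p ∧
          (∑ k, α₁ k * b₂ k) * (∑ k, α₂ k * b₁ k) =
            4 * Real.cos ((q : ℝ) * Real.pi / (p : ℝ)) ^ 2) ∧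
        ((∑ k, α₁ k * b₂ k) = 0 ↔ (∑ k, α₂ k * b₁ k) = 0)) := by
  change α₁ ⬝ᵥ b₁ = 2 at h₁
  change α₂ ⬝ᵥ b₂ = 2 at h₂
  change _ ↔ (∃ q : ℕ, 1 ≤ q ∧ 2 * q ≤ p ∧ α₁ ⬝ᵥ b₂ * α₂ ⬝ᵥ b₁ = _) ∧
    (α₁ ⬝ᵥ b₂ = 0 ↔ α₂ ⬝ᵥ b₁ = 0)
  subst hσ₁ hσ₂
  have hσ : (vecMulVec b₁ α₁ - 1) * (vecMulVec b₂ α₂ - 1) ≠ 1 := fun h =>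
    hne (left_inv_eq_right_inv (vecMulVec_sub_one_mul_self h₁) h)
  rw [vecMulVec_sub_one_mul_vecMulVec_sub_one] at hσ ⊢
  set L := (of ![-b₁, (α₁ ⬝ᵥ b₂) • b₁ - b₂])ᵀ
  set A := of ![α₁, α₂]
  have hAL : A * L = _ := of_mul_transpose_of h₁ h₂
  by_cases hxy : α₁ ⬝ᵥ b₂ * α₂ ⬝ᵥ b₁ = 4
  · refine iff_of_false (fun h => hσ ?_) fun ⟨⟨q, hq1, hqp, hq⟩, _⟩ => ?_
    · have hN : IsNilpotent (L * A) := ⟨3, by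
        have h3 : (L * A) ^ 3 = L * (A * L) ^ 2 * A := by
          simp only [pow_succ, pow_zero, Matrix.one_mul, Matrix.mul_assoc]
        rw [h3, hAL, sub_one_sq_eq_zero_of_mul_eq_four hxy, Matrix.mul_zero, Matrix.zero_mul]⟩
      rw [hN.eq_zero_of_add_one_pow_eq_one (by omega) h, zero_add]
    · have hsin := Real.sin_nat_mul_pi_div_pos hq1 (by omega : q < p)
      nlinarith [sin_sq_add_cos_sq (q * π / p)]
  · have hunit : IsUnit (A * L) := by
      rw [hAL, isUnit_iff_isUnit_det, isUnit_iff_ne_zero]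
      simp [det_fin_two]
      exact fun h => hxy (by linarith)
    rw [add_one_pow_eq_one_iff_of_isUnit hunit, hAL, sub_add_cancel]
    exact pow_eq_one_iff_of_mul_ne_four hxy (by omega)
end

section
/- With a_{ij} = α_i(b_j), the determinant of the 3×3 matrix (a_{ij}) satisfies det(a_{ij}) = tr(σ₁σ₂σ₃) + tr(σ₃σ₂σ₁) + 2. -/
open Matrix

/-- With `σᵢ = bᵢ⊗αᵢ − 1` (where `αᵢ(bᵢ) = 2`) and `a i j = αᵢ(b_j)`,
the determinant of the matrix `(a i j)` equals `tr(σ₁σ₂σ₃) + tr(σ₃σ₂σ₁) + 2`. -/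
theorem det_cartan_eq_trace_sum
    (b α : Fin 3 → Fin 3 → ℝ) (h2 : ∀ i, (∑ k, α i k * b i k) = 2)
    (σ : Fin 3 → Matrix (Fin 3) (Fin 3) ℝ)
    (hσ : ∀ i, σ i = Matrix.vecMulVec (b i) (α i) - 1) :
    (Matrix.of fun i j => ∑ k, α i k * b j k).det =
      (σ 0 * σ 1 * σ 2).trace + (σ 2 * σ 1 * σ 0).trace + 2 := by
  have h0 := h2 0
  have h1 := h2 1
  have h2' := h2 2
  simp only [Fin.sum_univ_three] at h0 h1 h2'
  set A : Fin 3 → Fin 3 → ℝ := fun i j =>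
    α i 0 * b j 0 + α i 1 * b j 1 + α i 2 * b j 2 with hA
  simp only [hσ, Matrix.det_fin_three, Matrix.trace_fin_three, Matrix.sub_apply,
    Matrix.mul_apply, Matrix.vecMulVec_apply, Matrix.one_apply, Matrix.of_apply,
    Fin.sum_univ_three]
  norm_num [Matrix.one_apply, Fin.ext_iff]
  linear_combination (A 1 1 * A 2 2 - 2 - A 1 2 * A 2 1) * h0 +
    (2 * A 2 2 - 2 - A 0 2 * A 2 0) * h1 + (2 - A 0 1 * A 1 0) * h2'
end

section
/- Assume in addition that a_{ij} = α_i(b_j) ≠ 0 for all i ≠ j. Then there exists a linear subspace V of ℝ³ with 0 ≠ V ≠ ℝ³ invariant under σ₁, σ₂ and σ₃ if and only if det(a_{ij}) = 0. -/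
open Matrix

/-!
An invariant subspace `W` of the reflections `σᵢ v = αᵢ(v) bᵢ - v` contains `αᵢ(v) bᵢ` for every
`v ∈ W`. So either all `αᵢ` vanish on `W`, or `W` contains some `bᵢ`; in the latter case, since
`αⱼ(bᵢ) ≠ 0` for `j ≠ i`, it contains every `bⱼ`. Hence a proper nonzero invariant subspace exists
iff `⋂ ker αᵢ ≠ 0` or the `bᵢ` do not span (both are invariant), i.e. iff `det α = 0` or `det b = 0`,
and `(aᵢⱼ) = α bᵀ`.
-/

namespace Matrix

variable {K ι κ : Type*} [Field K] [Fintype κ]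

section Reflection

variable [DecidableEq κ]

theorem vecMulVec_sub_one_mulVec (b α v : κ → K) :
    (vecMulVec b α - 1) *ᵥ v = (α ⬝ᵥ v) • b - v := by
  rw [sub_mulVec, one_mulVec, vecMulVec_mulVec, op_smul_eq_smul]

theorem mem_of_vecMulVec_sub_one_mulVec_mem {W : Submodule K (κ → K)} {b α v : κ → K}
    (hv : v ∈ W) (hσv : (vecMulVec b α - 1) *ᵥ v ∈ W) (hαv : α ⬝ᵥ v ≠ 0) : b ∈ W := by
  rw [← W.smul_mem_iff hαv, ← sub_add_cancel ((α ⬝ᵥ v) • b) v, ← vecMulVec_sub_one_mulVec]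
  exact W.add_mem hσv hv

variable {α b : ι → κ → K}

theorem le_ker_or_span_le_of_forall_mulVec_mem {W : Submodule K (κ → K)}
    (hne : ∀ i j, i ≠ j → α i ⬝ᵥ b j ≠ 0)
    (hW : ∀ i, ∀ v ∈ W, (vecMulVec (b i) (α i) - 1) *ᵥ v ∈ W) :
    W ≤ LinearMap.ker (of α).mulVecLin ∨ Submodule.span K (Set.range b) ≤ W := by
  refine or_iff_not_imp_left.mpr fun hker => ?_
  obtain ⟨v, hv, hαv⟩ := Set.not_subset.mp hker
  obtain ⟨i, hi⟩ := Function.ne_iff.mp hαv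
  have hbi : b i ∈ W := mem_of_vecMulVec_sub_one_mulVec_mem hv (hW i v hv) hi
  refine Submodule.span_le.mpr (Set.range_subset_iff.mpr fun j => ?_)
  obtain rfl | hji := eq_or_ne j i
  · exact hbi
  · exact mem_of_vecMulVec_sub_one_mulVec_mem hbi (hW j _ hbi) (hne j i hji)

theorem vecMulVec_sub_one_mulVec_mem_ker (i : ι) {v : κ → K}
    (hv : v ∈ LinearMap.ker (of α).mulVecLin) :
    (vecMulVec (b i) (α i) - 1) *ᵥ v ∈ LinearMap.ker (of α).mulVecLin := by
  have hαv : α i ⬝ᵥ v = 0 := congr_fun (LinearMap.mem_ker.mp hv) i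
  rw [vecMulVec_sub_one_mulVec, hαv, zero_smul, zero_sub]
  exact Submodule.neg_mem _ hv

theorem vecMulVec_sub_one_mulVec_mem_span (i : ι) {v : κ → K}
    (hv : v ∈ Submodule.span K (Set.range b)) :
    (vecMulVec (b i) (α i) - 1) *ᵥ v ∈ Submodule.span K (Set.range b) := by
  rw [vecMulVec_sub_one_mulVec]
  exact sub_mem (Submodule.smul_mem _ _ (Submodule.subset_span ⟨i, rfl⟩)) hv

end Reflection

variable {α b : ι → κ → K} {i : ι}

theorem ker_mulVecLin_ne_top_of_dotProduct_ne_zero (hi : α i ⬝ᵥ b i ≠ 0) :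
    LinearMap.ker (of α).mulVecLin ≠ ⊤ := by
  intro h
  have hbi : b i ∈ LinearMap.ker (of α).mulVecLin := h ▸ Submodule.mem_top
  exact hi (congr_fun (LinearMap.mem_ker.mp hbi) i)

theorem span_range_ne_bot_of_dotProduct_ne_zero (hi : α i ⬝ᵥ b i ≠ 0) :
    Submodule.span K (Set.range b) ≠ ⊥ := by
  rw [Ne, Submodule.span_eq_bot, not_forall]
  exact ⟨b i, fun h => hi (by rw [h ⟨i, rfl⟩, dotProduct_zero])⟩

section Square

variable [Fintype ι] [DecidableEq ι]

theorem det_of_dotProduct (α b : ι → ι → K) :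
    (of fun i j => α i ⬝ᵥ b j).det = (of α).det * (of b).det := by
  rw [← det_transpose (of b), ← det_mul]
  congr 1

theorem ker_mulVecLin_ne_bot_iff_det_eq_zero (A : Matrix ι ι K) :
    LinearMap.ker A.mulVecLin ≠ ⊥ ↔ A.det = 0 := by
  rw [← exists_mulVec_eq_zero_iff, Submodule.ne_bot_iff]
  simp only [LinearMap.mem_ker, mulVecLin_apply]
  exact exists_congr fun v => and_comm

theorem span_range_ne_top_iff_det_eq_zero (B : Matrix ι ι K) :
    Submodule.span K (Set.range B) ≠ ⊤ ↔ B.det = 0 := by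
  change Submodule.span K (Set.range B.row) ≠ ⊤ ↔ _
  rw [← range_vecMulLinear, Ne, LinearMap.range_eq_top, ← not_ne_iff, not_iff_not,
    ← isUnit_iff_ne_zero, ← isUnit_iff_isUnit_det]
  exact vecMul_surjective_iff_isUnit

theorem exists_invariant_submodule_iff_det_eq_zero (α b : ι → ι → K)
    (hdiag : ∀ i, α i ⬝ᵥ b i ≠ 0) (hne : ∀ i j, i ≠ j → α i ⬝ᵥ b j ≠ 0) :
    (∃ W : Submodule K (ι → K), W ≠ ⊥ ∧ W ≠ ⊤ ∧
        ∀ i, ∀ v ∈ W, (vecMulVec (b i) (α i) - 1) *ᵥ v ∈ W) ↔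
      (of fun i j => α i ⬝ᵥ b j).det = 0 := by
  rw [det_of_dotProduct, mul_eq_zero, ← ker_mulVecLin_ne_bot_iff_det_eq_zero,
    ← span_range_ne_top_iff_det_eq_zero]
  constructor
  · rintro ⟨W, hbot, htop, hW⟩
    rcases le_ker_or_span_le_of_forall_mulVec_mem hne hW with hker | hspan
    · exact .inl (ne_bot_of_le_ne_bot hbot hker)
    · exact .inr (ne_top_of_le_ne_top htop hspan)
  · rcases isEmpty_or_nonempty ι with hι | ⟨⟨i⟩⟩
    · rintro (h | h) <;> exact absurd (Subsingleton.elim _ _) h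
    rintro (hker | hspan)
    · exact ⟨_, hker, ker_mulVecLin_ne_top_of_dotProduct_ne_zero (hdiag i),
        fun j _ => vecMulVec_sub_one_mulVec_mem_ker j⟩
    · exact ⟨_, span_range_ne_bot_of_dotProduct_ne_zero (hdiag i), hspan,
        fun j _ => vecMulVec_sub_one_mulVec_mem_span j⟩

end Square

end Matrix

/-- With `σᵢ = bᵢ⊗αᵢ − 1` (where `αᵢ(bᵢ) = 2`) and all off-diagonal
`a i j = αᵢ(b_j)` nonzero, there is a nontrivial proper linear subspace of `ℝ³` invariant
under `σ₁, σ₂, σ₃` if and only if `det (a i j) = 0`. -/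
theorem reducible_iff_det_cartan_eq_zero
    (b α : Fin 3 → Fin 3 → ℝ) (h2 : ∀ i, (∑ k, α i k * b i k) = 2)
    (σ : Fin 3 → Matrix (Fin 3) (Fin 3) ℝ)
    (hσ : ∀ i, σ i = Matrix.vecMulVec (b i) (α i) - 1)
    (hne : ∀ i j, i ≠ j → (∑ k, α i k * b j k) ≠ 0) :
    (∃ V : Submodule ℝ (Fin 3 → ℝ), V ≠ ⊥ ∧ V ≠ ⊤ ∧
        ∀ i, ∀ v ∈ V, (σ i).mulVec v ∈ V) ↔
      (Matrix.of fun i j => ∑ k, α i k * b j k).det = 0 := by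
  obtain rfl : σ = fun i => vecMulVec (b i) (α i) - 1 := funext hσ
  exact exists_invariant_submodule_iff_det_eq_zero α b
    (fun i => (h2 i).trans_ne two_ne_zero) hne
end

section
/- Let A be a Cartan matrix of type (q₁,q₂,q₃) with respect to (p₁,p₂,p₃), let γ_i denote the i-th row of A regarded as a linear functional on ℝ³, let e₁,e₂,e₃ be the standard basis of ℝ³, and set σ_i = e_i⊗γ_i − 1. Then each σ_i lies in SL(3,ℝ), σ_i² = 1, the σ_i are pairwise distinct and different from the identity, and (σ₂σ₃)^{p₁} = (σ₃σ₁)^{p₂} = (σ₁σ₂)^{p₃} = 1. Consequently there is a (unique) group homomorphism ρ_A from the Coxeter group Γ_{p₁,p₂,p₃} to SL(3,ℝ) with ρ_A(s_i) = σ_i for i = 1,2,3. -/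
open Matrix

/-- A real 3×3 matrix `A` is a Cartan matrix of type `(q₁,q₂,q₃)` with respect to
`(p₁,p₂,p₃)` (indices shifted to `0,1,2`): diagonal entries `2`,
`A i j * A j i = 4cos²(q_k π / p_k)` for `{i,j,k} = {0,1,2}`, and
`A i j = 0 → A j i = 0`. -/
def IsCartanMatrix (p q : Fin 3 → ℕ) (A : Matrix (Fin 3) (Fin 3) ℝ) : Prop :=
  (∀ i, A i i = 2) ∧
  (∀ i j k : Fin 3, i ≠ j → j ≠ k → i ≠ k →
    A i j * A j i = 4 * Real.cos ((q k : ℝ) * Real.pi / (p k : ℝ)) ^ 2) ∧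
  (∀ i j, A i j = 0 → A j i = 0)

/-- The Coxeter matrix of the triangle group `Γ_{p₁,p₂,p₃}`:
`s_i s_j` has order `p_k` for `{i,j,k} = {0,1,2}` (note `-(i+j)` is the third index). -/
def triangleCoxeterMatrix (p : Fin 3 → ℕ) (hp : ∀ k, 2 ≤ p k) : CoxeterMatrix (Fin 3) where
  M := Matrix.of fun i j => if i = j then 1 else p (-(i + j))
  isSymm := by
    show _ = _
    ext i j
    by_cases hij : i = j
    · simp [hij]
    · simp [hij, Ne.symm hij, add_comm]
  diagonal i := by simp
  off_diagonal i j hij := by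
    have h2 := hp (-(i + j))
    simp only [Matrix.of_apply, if_neg hij]
    omega

/-!
Up to sign, `σᵢ` is the reflection `1 - eᵢ ⊗ γᵢ`, so `P = σᵢσⱼ` is a product of two reflections:
it fixes the line `ker γᵢ ∩ ker γⱼ` and acts on `span (eᵢ, eⱼ)` with determinant `1` and trace
`aᵢⱼaⱼᵢ - 2 = 2 cos φ`, where `φ = 2qₖπ/pₖ`. Hence `(P - 1)(P² - 2 cos φ P + 1) = 0`. If `2qₖ < pₖ`,
the roots `1, e^{±iφ}` of this cubic are distinct `pₖ`-th roots of unity, so it divides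
`X^{pₖ} - 1` and `P^{pₖ} = 1`. If `2qₖ = pₖ`, then `aᵢⱼ = aⱼᵢ = 0` and `P` is an involution.
The presentation of the Coxeter group then yields `ρ_A`.
-/

open Polynomial Complex ComplexConjugate

theorem Polynomial.X_sub_one_mul_dvd_X_pow_sub_one {n : ℕ} {ζ : ℂ} (hζ : ζ ^ n = 1)
    (him : ζ.im ≠ 0) :
    (X - 1) * (X ^ 2 - C (2 * ζ.re) * X + 1) ∣ (X ^ n - 1 : ℝ[X]) := by
  rcases Nat.eq_zero_or_pos n with rfl | hn
  · simp
  have hne : (X ^ n - 1 : ℂ[X]) ≠ 0 := by simpa using X_pow_sub_C_ne_zero hn (1 : ℂ)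
  have hroots : ({1, ζ, conj ζ} : Multiset ℂ) ≤ (X ^ n - 1 : ℂ[X]).roots := by
    rw [Multiset.le_iff_subset]
    · intro z hz
      rw [mem_roots hne, IsRoot, eval_sub, eval_pow, eval_X, eval_one, sub_eq_zero]
      simp only [Multiset.insert_eq_cons, Multiset.mem_cons, Multiset.mem_singleton] at hz
      rcases hz with rfl | rfl | rfl
      · exact one_pow n
      · exact hζ
      · rw [← map_pow, hζ, map_one]
    · simp only [Multiset.insert_eq_cons, Multiset.nodup_cons, Multiset.mem_cons,
        Multiset.mem_singleton, Multiset.nodup_singleton, Complex.ext_iff, conj_re, conj_im,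
        one_im]
      refine ⟨by grind, by grind, trivial⟩
  have hmap : ((X - 1) * (X ^ 2 - C (2 * ζ.re) * X + 1) : ℝ[X]).map ofRealHom =
      (({1, ζ, conj ζ} : Multiset ℂ).map fun a => X - C a).prod := by
    have hre : ((2 * ζ.re : ℝ) : ℂ) = ζ + conj ζ := by rw [add_conj]
    have hnorm : (1 : ℂ[X]) = C ζ * C (conj ζ) := by
      rw [← C_mul, mul_conj, normSq_eq_norm_sq, norm_eq_one_of_pow_eq_one hζ hn.ne', one_pow,
        ofReal_one, C_1]
    simp only [Polynomial.map_mul, Polynomial.map_sub, Polynomial.map_add, Polynomial.map_pow,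
      map_X, map_C, Polynomial.map_one, ofRealHom_eq_coe, hre, C_add, Multiset.insert_eq_cons,
      Multiset.map_cons, Multiset.prod_cons, Multiset.map_singleton, Multiset.prod_singleton, C_1]
    linear_combination (X - 1) * hnorm
  have hmonic : ((X - 1) * (X ^ 2 - C (2 * ζ.re) * X + 1) : ℝ[X]).Monic := by monicity!
  rw [← map_dvd_map ofRealHom ofReal_injective hmonic, hmap, Polynomial.map_sub,
    Polynomial.map_pow, map_X, Polynomial.map_one]
  exact (Multiset.prod_X_sub_C_dvd_iff_le_roots hne _).2 hroots

theorem pow_eq_one_of_sub_one_mul_eq_zero {R : Type*} [Ring R] [Algebra ℝ R] {x : R} {n : ℕ}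
    {ζ : ℂ} (hζ : ζ ^ n = 1) (him : ζ.im ≠ 0)
    (hx : (x - 1) * (x ^ 2 - (2 * ζ.re) • x + 1) = 0) : x ^ n = 1 := by
  obtain ⟨g, hg⟩ := X_sub_one_mul_dvd_X_pow_sub_one hζ him
  have hcubic : aeval x ((X - 1) * (X ^ 2 - C (2 * ζ.re) * X + 1)) = 0 := by
    rw [← hx]; simp [Algebra.smul_def]
  have := congrArg (aeval x) hg
  rwa [map_mul, hcubic, zero_mul, map_sub, map_pow, aeval_X, map_one, sub_eq_zero] at this

section InvolutionPair

variable {K R : Type*} [CommRing K] [Ring R] [Algebra K R] {a b : R}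

theorem sub_one_mul_self_eq_one (ha : a * a = (2 : K) • a) : (a - 1) * (a - 1) = 1 := by
  rw [sub_one_mul, mul_sub_one, ha, ofNat_smul_eq_nsmul, two_nsmul]
  abel

theorem sub_one_mul_sub_one_sq_eq_one (ha : a * a = (2 : K) • a) (hb : b * b = (2 : K) • b)
    (hab : a * b = 0) (hba : b * a = 0) : ((a - 1) * (b - 1)) ^ 2 = 1 := by
  simp only [sq, sub_mul, mul_sub, one_mul, mul_one, mul_zero, zero_mul, ha, hb, hab, hba]
  module

/- With these relations every word in `a` and `b` reduces to a combination of `1, a, b, ab, ba`,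
so the identity is a finite computation. -/
theorem sub_one_mul_sub_one_cubic (c : K) (ha : a * a = (2 : K) • a) (hb : b * b = (2 : K) • b)
    (haba : a * b * a = c • a) (hbab : b * a * b = c • b) :
    ((a - 1) * (b - 1) - 1) *
      (((a - 1) * (b - 1)) ^ 2 - (c - 2) • ((a - 1) * (b - 1)) + 1) = 0 := by
  have ha' : ∀ z, a * (a * z) = (2 : K) • (a * z) := fun z => by
    rw [← mul_assoc, ha, smul_mul_assoc]
  have hb' : ∀ z, b * (b * z) = (2 : K) • (b * z) := fun z => by
    rw [← mul_assoc, hb, smul_mul_assoc]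
  rw [mul_assoc] at haba hbab
  simp only [sq, mul_add, mul_sub, sub_mul, mul_one, one_mul, mul_assoc, mul_smul_comm, smul_sub,
    ha, hb, ha', hb', haba, hbab, smul_smul]
  module

end InvolutionPair

theorem Matrix.det_vecMulVec_sub_one {n R : Type*} [Fintype n] [DecidableEq n] [CommRing R]
    (u v : n → R) : (vecMulVec u v - 1).det = (-1) ^ Fintype.card n * (1 - v ⬝ᵥ u) := by
  rw [← neg_sub, det_neg, vecMulVec_eq Unit, det_one_sub_mul_comm, det_unique, sub_apply,
    one_apply_eq, replicateRow_mul_replicateCol_apply]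

theorem Matrix.vecMulVec_mul_vecMulVec_single {l n R : Type*} [Fintype n] [DecidableEq n]
    [CommRing R] (u : l → R) (v w : n → R) (k : n) :
    vecMulVec u w * vecMulVec (Pi.single k 1) v = w k • vecMulVec u v := by
  rw [vecMulVec_mul_vecMulVec, dotProduct_single, mul_one, vecMulVec_smul]

section CartanInvolution

variable {n R : Type*} [DecidableEq n] [CommRing R]

def cartanInvolution (A : Matrix n n R) (i : n) : Matrix n n R :=
  vecMulVec (Pi.single i 1) (A i) - 1

variable {A : Matrix n n R} {i j : n}

theorem cartanInvolution_apply (k l : n) :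
    cartanInvolution A i k l = (if k = i then A i l else 0) - if k = l then 1 else 0 := by
  simp [cartanInvolution, vecMulVec_apply, Pi.single_apply, one_apply]

theorem cartanInvolution_ne [CharZero R] (hi : A i i = 2) (hij : i ≠ j) :
    cartanInvolution A i ≠ cartanInvolution A j := by
  intro h
  have := congrFun (congrFun h i) i
  simp only [cartanInvolution_apply, if_true, hi, if_neg hij] at this
  norm_num at this

theorem cartanInvolution_ne_one [CharZero R] [Nontrivial n] : cartanInvolution A i ≠ 1 := by
  obtain ⟨k, hk⟩ := exists_ne i
  intro h
  have := congrFun (congrFun h k) k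
  rw [cartanInvolution_apply, if_neg hk, if_pos rfl, one_apply_eq] at this
  norm_num at this

variable [Fintype n]

theorem det_cartanInvolution (hi : A i i = 2) :
    (cartanInvolution A i).det = (-1) ^ (Fintype.card n + 1) := by
  rw [cartanInvolution, det_vecMulVec_sub_one, dotProduct_single, hi]
  ring

theorem cartanInvolution_mul_self (hi : A i i = 2) :
    cartanInvolution A i * cartanInvolution A i = 1 :=
  sub_one_mul_self_eq_one (K := R) (by rw [vecMulVec_mul_vecMulVec_single, hi])

theorem cartanInvolution_mul_cubic (hi : A i i = 2) (hj : A j j = 2) :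
    (cartanInvolution A i * cartanInvolution A j - 1) *
      ((cartanInvolution A i * cartanInvolution A j) ^ 2 -
        (A i j * A j i - 2) • (cartanInvolution A i * cartanInvolution A j) + 1) = 0 := by
  refine sub_one_mul_sub_one_cubic (A i j * A j i) ?_ ?_ ?_ ?_ <;>
    simp only [vecMulVec_mul_vecMulVec_single, smul_mul_assoc, smul_smul, hi, hj, mul_comm]

theorem cartanInvolution_mul_sq_of_eq_zero (hi : A i i = 2) (hj : A j j = 2) (hij : A i j = 0)
    (hji : A j i = 0) : (cartanInvolution A i * cartanInvolution A j) ^ 2 = 1 :=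
  sub_one_mul_sub_one_sq_eq_one (K := R)
    (by rw [vecMulVec_mul_vecMulVec_single, hi]) (by rw [vecMulVec_mul_vecMulVec_single, hj])
    (by rw [vecMulVec_mul_vecMulVec_single, hij, zero_smul])
    (by rw [vecMulVec_mul_vecMulVec_single, hji, zero_smul])

end CartanInvolution

theorem cartanInvolution_mul_pow_eq_one {n : Type*} [Fintype n] [DecidableEq n]
    {A : Matrix n n ℝ} {i j : n} {p q : ℕ} (hi : A i i = 2) (hj : A j j = 2)
    (hij : A i j * A j i = 4 * Real.cos (q * Real.pi / p) ^ 2) (hzero : A i j = 0 ↔ A j i = 0)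
    (hq : 1 ≤ q) (hqp : 2 * q ≤ p) :
    (cartanInvolution A i * cartanInvolution A j) ^ p = 1 := by
  rcases hqp.lt_or_eq with hlt | heq
  · set φ : ℝ := 2 * (q * Real.pi / p)
    have hp0 : p ≠ 0 := by omega
    have hp : (0 : ℝ) < p := by positivity
    refine pow_eq_one_of_sub_one_mul_eq_zero (ζ := exp (φ * I)) ?_ ?_ ?_
    · rw [← exp_nat_mul, ← exp_nat_mul_two_pi_mul_I q]
      congr 1
      simp only [φ]
      push_cast
      field_simp
    · rw [exp_ofReal_mul_I_im]
      apply (Real.sin_pos_of_pos_of_lt_pi (by positivity) _).ne'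
      simp only [φ]
      rw [← mul_div_assoc, div_lt_iff₀ hp]
      have : (2 * q : ℝ) < p := by exact_mod_cast hlt
      nlinarith [Real.pi_pos]
    · have hc : 2 * (exp (φ * I)).re = A i j * A j i - 2 := by
        rw [exp_ofReal_mul_I_re, Real.cos_two_mul, hij]
        ring
      rw [hc]
      exact cartanInvolution_mul_cubic hi hj
  · have hcos : Real.cos (q * Real.pi / p) = 0 := by
      rw [← heq, Nat.cast_mul, Nat.cast_ofNat, mul_comm (2 : ℝ), ← div_div, mul_div_cancel_left₀]
      · exact Real.cos_pi_div_two
      · exact_mod_cast (by omega : q ≠ 0)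
    rw [hcos] at hij
    obtain ⟨hij0, hji0⟩ : A i j = 0 ∧ A j i = 0 := by
      rcases mul_eq_zero.1 (hij.trans (by ring)) with h | h
      · exact ⟨h, hzero.1 h⟩
      · exact ⟨hzero.2 h, h⟩
    rw [← heq, pow_mul, cartanInvolution_mul_sq_of_eq_zero hi hj hij0 hji0, one_pow]

theorem CoxeterSystem.existsUnique_monoidHom {B W G : Type*} [Group W] [Monoid G]
    {M : CoxeterMatrix B} (cs : CoxeterSystem M W) {f : B → G} (hf : M.IsLiftable f) :
    ∃! ρ : W →* G, ∀ i, ρ (cs.simple i) = f i :=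
  ⟨cs.lift ⟨f, hf⟩, cs.lift_apply_simple hf,
    fun _ hρ => cs.ext_simple fun i => (hρ i).trans (cs.lift_apply_simple hf i).symm⟩

theorem triangleCoxeterMatrix_isLiftable {G : Type*} [Monoid G] {p : Fin 3 → ℕ}
    (hp : ∀ k, 2 ≤ p k) {f : Fin 3 → G} (hf : ∀ i, f i * f i = 1)
    (hfp : ∀ i j, i ≠ j → (f i * f j) ^ p (-(i + j)) = 1) :
    (triangleCoxeterMatrix p hp).IsLiftable f := by
  intro i j
  by_cases hij : i = j
  · subst hij
    rw [(triangleCoxeterMatrix p hp).diagonal, pow_one, hf]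
  · convert hfp i j hij using 2
    exact if_neg hij

/-- Given a Cartan matrix `A` of type `(q₁,q₂,q₃)` with respect to
`(p₁,p₂,p₃)`, the matrices `σᵢ = eᵢ⊗γᵢ − 1` (with `γᵢ` the `i`-th row of `A`) are
pairwise distinct nontrivial involutions in `SL(3,ℝ)` satisfying the triangle group
relations, and hence induce a unique homomorphism `Γ_{p₁,p₂,p₃} → SL(3,ℝ)` sending the
Coxeter generator `sᵢ` to `σᵢ`. -/
theorem cartan_matrix_gives_coxeter_representation
    (p q : Fin 3 → ℕ) (hp : ∀ k, 2 ≤ p k) (hq : ∀ k, 1 ≤ q k ∧ 2 * q k ≤ p k)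
    (A : Matrix (Fin 3) (Fin 3) ℝ) (hA : IsCartanMatrix p q A)
    (σ : Fin 3 → Matrix (Fin 3) (Fin 3) ℝ)
    (hσ : ∀ i, σ i = Matrix.vecMulVec (fun j => if j = i then 1 else 0) (A i) - 1) :
    (∀ i, (σ i).det = 1) ∧
    (∀ i, σ i * σ i = 1) ∧
    (∀ i j, i ≠ j → σ i ≠ σ j) ∧
    (∀ i, σ i ≠ 1) ∧
    (σ 1 * σ 2) ^ (p 0) = 1 ∧ (σ 2 * σ 0) ^ (p 1) = 1 ∧ (σ 0 * σ 1) ^ (p 2) = 1 ∧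
    (∃! ρ : (triangleCoxeterMatrix p hp).Group →* Matrix.SpecialLinearGroup (Fin 3) ℝ,
      ∀ i, ((ρ ((triangleCoxeterMatrix p hp).simple i) :
        Matrix (Fin 3) (Fin 3) ℝ)) = σ i) := by
  obtain rfl : σ = cartanInvolution A := funext fun i => by
    rw [hσ, cartanInvolution]
    congr 2
    ext j
    rw [Pi.single_apply]
  obtain ⟨hdiag, hprod, hzero⟩ := hA
  have hdet (i : Fin 3) : (cartanInvolution A i).det = 1 := by
    rw [det_cartanInvolution (hdiag i)]
    norm_num
  have hpow (i j : Fin 3) (hij : i ≠ j) :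
      (cartanInvolution A i * cartanInvolution A j) ^ p (-(i + j)) = 1 := by
    have hk : j ≠ -(i + j) ∧ i ≠ -(i + j) := by revert i j; decide
    exact cartanInvolution_mul_pow_eq_one (hdiag i) (hdiag j) (hprod i j _ hij hk.1 hk.2)
      ⟨hzero i j, hzero j i⟩ (hq _).1 (hq _).2
  refine ⟨hdet, fun i => cartanInvolution_mul_self (hdiag i),
    fun i j => cartanInvolution_ne (hdiag i), fun i => cartanInvolution_ne_one,
    hpow 1 2 (by decide), hpow 2 0 (by decide), hpow 0 1 (by decide), ?_⟩
  let S (i : Fin 3) : Matrix.SpecialLinearGroup (Fin 3) ℝ := ⟨cartanInvolution A i, hdet i⟩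
  have hS : (triangleCoxeterMatrix p hp).IsLiftable S :=
    triangleCoxeterMatrix_isLiftable hp (fun i => Subtype.ext (cartanInvolution_mul_self (hdiag i)))
      fun i j hij => Subtype.ext (by simpa using hpow i j hij)
  exact (existsUnique_congr fun ρ => forall_congr' fun i => Subtype.ext_iff).1
    ((triangleCoxeterMatrix p hp).toCoxeterSystem.existsUnique_monoidHom hS)
end

section
/- Let C = (a_{ij}) be the 3×3 matrix with a_{ij} = α_i(b_j), let γ_i denote the i-th row of C regarded as a linear functional on ℝ³, let e₁,e₂,e₃ be the standard basis of ℝ³, and set τ_i = e_i⊗γ_i − 1. Then the closures in (M₃(ℝ))³ of the two conjugation orbits {(gσ₁g⁻¹, gσ₂g⁻¹, gσ₃g⁻¹) : g ∈ GL(3,ℝ)} and {(gτ₁g⁻¹, gτ₂g⁻¹, gτ₃g⁻¹) : g ∈ GL(3,ℝ)} have nonempty intersection. -/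
/-!
Let `B` be the matrix with columns `bⱼ` and `Xᵢ = eᵢ ⊗ αᵢ`, so that `σᵢ = B Xᵢ - 1` and
`τᵢ = Xᵢ B - 1`. Factor `B = G P` with `G` invertible and `P` idempotent. Then `(B Xᵢ)` is
conjugate to `(P Yᵢ)` and `(Xᵢ B) = (Yᵢ P)`, where `Yᵢ = Xᵢ G`. Conjugating `(Yᵢ P)` by
`P + t (1 - P)`, and `(P Yᵢ)` by its inverse, gives `P Yᵢ P` plus a term of order `t`, so both
orbit closures contain `(P Yᵢ P - 1)`.
-/

open Filter Topology MulAction ConjAct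

theorem Module.End.exists_eq_unit_mul_isIdempotentElem {K V : Type*} [Field K] [AddCommGroup V]
    [Module K V] [FiniteDimensional K V] (f : Module.End K V) :
    ∃ (g : (Module.End K V)ˣ) (p : Module.End K V), IsIdempotentElem p ∧ f = g * p := by
  obtain ⟨C, hC⟩ := (LinearMap.ker f).exists_isCompl
  set p := C.projection (LinearMap.ker f) hC.symm
  have hinj : Function.Injective (f.domRestrict C) :=
    LinearMap.injective_domRestrict_iff.2 hC.disjoint.symm
  obtain ⟨g, hg⟩ := Submodule.exists_linearEquiv_restrict_eq (LinearEquiv.ofInjective _ hinj)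
  refine ⟨(LinearMap.GeneralLinearGroup.generalLinearEquiv K V).symm g, p,
    Submodule.isIdempotentElem_projection _, LinearMap.ext fun x => ?_⟩
  have hfp : f x = f (p x) := by
    rw [← sub_eq_zero, ← map_sub]
    exact Submodule.sub_projection_mem hC.symm x
  rw [hfp, Module.End.mul_apply]
  exact hg ⟨p x, Submodule.projection_apply_mem _ x⟩

theorem Matrix.exists_eq_unit_mul_isIdempotentElem {n K : Type*} [Fintype n] [DecidableEq n]
    [Field K] (B : Matrix n n K) :
    ∃ (G : GL n K) (P : Matrix n n K), IsIdempotentElem P ∧ B = G * P := by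
  obtain ⟨g, p, hp, hB⟩ :=
    Module.End.exists_eq_unit_mul_isIdempotentElem (Matrix.toLinAlgEquiv' B)
  refine ⟨Units.map (Matrix.toLinAlgEquiv' (R := K) (n := n)).symm.toMonoidHom g,
    Matrix.toLinAlgEquiv'.symm p, hp.map _, ?_⟩
  apply Matrix.toLinAlgEquiv'.injective
  simpa using hB

theorem mem_closure_of_forall_add_smul_mem {𝕜 E : Type*} [NontriviallyNormedField 𝕜]
    [AddCommGroup E] [Module 𝕜 E] [TopologicalSpace E] [ContinuousAdd E] [ContinuousSMul 𝕜 E]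
    {s : Set E} {x v : E} (h : ∀ t : 𝕜, t ≠ 0 → x + t • v ∈ s) : x ∈ closure s := by
  have hcont : Tendsto (fun t : 𝕜 => x + t • v) (𝓝[≠] 0) (𝓝 x) := by
    have hc : Continuous fun t : 𝕜 => x + t • v := by fun_prop
    simpa using (hc.tendsto 0).mono_left nhdsWithin_le_nhds
  exact mem_closure_of_tendsto hcont (eventually_nhdsWithin_of_forall h)

namespace IsIdempotentElem

variable {𝕜 R : Type*} [Field 𝕜] [Ring R] [Algebra 𝕜 R] {P : R}

def dilation (hP : IsIdempotentElem P) (t : 𝕜ˣ) : Rˣ where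
  val := P + (t : 𝕜) • (1 - P)
  inv := P + (↑t⁻¹ : 𝕜) • (1 - P)
  val_inv := by
    simp [mul_add, add_mul, hP.eq, hP.mul_one_sub_self, hP.one_sub_mul_self, hP.one_sub.eq]
  inv_val := by
    simp [mul_add, add_mul, hP.eq, hP.mul_one_sub_self, hP.one_sub_mul_self, hP.one_sub.eq]

theorem dilation_mul_mul_inv (hP : IsIdempotentElem P) (t : 𝕜ˣ) (Y : R) :
    (hP.dilation t : R) * (Y * P) * ↑(hP.dilation t)⁻¹ =
      P * Y * P + (t : 𝕜) • ((1 - P) * Y * P) := by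
  have hPu : P * ↑(hP.dilation t)⁻¹ = P := by
    simp [dilation, mul_add, hP.eq, hP.mul_one_sub_self]
  rw [mul_assoc _ Y, mul_assoc _ (Y * P), mul_assoc Y, hPu]
  simp only [dilation, add_mul, smul_mul_assoc, mul_assoc]

theorem inv_dilation_mul_mul (hP : IsIdempotentElem P) (t : 𝕜ˣ) (Y : R) :
    ↑(hP.dilation t)⁻¹ * (P * Y) * (hP.dilation t : R) =
      P * Y * P + (t : 𝕜) • (P * Y * (1 - P)) := by
  have huP : ↑(hP.dilation t)⁻¹ * P = P := by
    simp [dilation, add_mul, hP.eq, hP.one_sub_mul_self]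
  rw [← mul_assoc, huP]
  simp only [dilation, mul_add, mul_smul_comm, mul_assoc]

end IsIdempotentElem

section ConjugationOrbit

variable {R ι : Type*} [Ring R] [TopologicalSpace R] [ContinuousAdd R]

theorem IsIdempotentElem.sandwich_mem_closure_orbit_mul_right (𝕜 : Type*)
    [NontriviallyNormedField 𝕜] [Algebra 𝕜 R] [ContinuousSMul 𝕜 R] {P : R} (hP : IsIdempotentElem P)
    (Y : ι → R) :
    (fun i => P * Y i * P) ∈ closure (orbit (ConjAct Rˣ) fun i => Y i * P) :=
  mem_closure_of_forall_add_smul_mem (𝕜 := 𝕜) (v := fun i => (1 - P) * Y i * P) fun t ht =>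
    ⟨toConjAct (hP.dilation (Units.mk0 t ht)), funext fun i => by
      simp only [Pi.smul_apply, units_smul_def, ofConjAct_toConjAct, hP.dilation_mul_mul_inv,
        Pi.add_apply, Units.val_mk0]⟩

theorem IsIdempotentElem.sandwich_mem_closure_orbit_mul_left (𝕜 : Type*)
    [NontriviallyNormedField 𝕜] [Algebra 𝕜 R] [ContinuousSMul 𝕜 R] {P : R} (hP : IsIdempotentElem P)
    (Y : ι → R) :
    (fun i => P * Y i * P) ∈ closure (orbit (ConjAct Rˣ) fun i => P * Y i) :=
  mem_closure_of_forall_add_smul_mem (𝕜 := 𝕜) (v := fun i => P * Y i * (1 - P)) fun t ht =>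
    ⟨toConjAct (hP.dilation (Units.mk0 t ht))⁻¹, funext fun i => by
      simp only [Pi.smul_apply, units_smul_def, ofConjAct_toConjAct, inv_inv,
        hP.inv_dilation_mul_mul, Pi.add_apply, Units.val_mk0]⟩

theorem closure_orbit_mul_inter_closure_orbit_mul_nonempty (𝕜 : Type*)
    [NontriviallyNormedField 𝕜] [Algebra 𝕜 R] [ContinuousSMul 𝕜 R] {G : Rˣ} {P B : R}
    (hP : IsIdempotentElem P) (hB : B = G * P) (X : ι → R) :
    (closure (orbit (ConjAct Rˣ) fun i => B * X i) ∩
      closure (orbit (ConjAct Rˣ) fun i => X i * B)).Nonempty := by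
  have horbit : orbit (ConjAct Rˣ) (fun i => B * X i) =
      orbit (ConjAct Rˣ) fun i => P * (X i * G) := by
    rw [← orbit_smul (toConjAct G⁻¹)]
    congr 1
    funext i
    simp [units_smul_def, hB, mul_assoc]
  refine ⟨fun i => P * (X i * G) * P, ?_, ?_⟩
  · rw [horbit]
    exact hP.sandwich_mem_closure_orbit_mul_left 𝕜 _
  · simpa only [hB, mul_assoc] using hP.sandwich_mem_closure_orbit_mul_right 𝕜 fun i => X i * G

end ConjugationOrbit

theorem Matrix.closure_orbit_mul_inter_closure_orbit_mul_nonempty {𝕜 n ι : Type*}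
    [NontriviallyNormedField 𝕜] [Fintype n] [DecidableEq n] (B : Matrix n n 𝕜)
    (X : ι → Matrix n n 𝕜) :
    (closure (orbit (ConjAct (GL n 𝕜)) fun i => B * X i) ∩
      closure (orbit (ConjAct (GL n 𝕜)) fun i => X i * B)).Nonempty := by
  obtain ⟨G, P, hP, hB⟩ := B.exists_eq_unit_mul_isIdempotentElem
  exact _root_.closure_orbit_mul_inter_closure_orbit_mul_nonempty 𝕜 hP hB X

theorem sub_one_mem_closure_conj_triple_of_mem_closure_orbit {R : Type*} [Ring R]
    [TopologicalSpace R] [ContinuousSub R] {M N Z : Fin 3 → R} (hN : ∀ i, N i = M i - 1)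
    (hZ : Z ∈ closure (orbit (ConjAct Rˣ) M)) :
    (Z 0 - 1, Z 1 - 1, Z 2 - 1) ∈ closure
      {x | ∃ g : Rˣ, x = (g * N 0 * ↑g⁻¹, g * N 1 * ↑g⁻¹, g * N 2 * ↑g⁻¹)} := by
  refine map_mem_closure (f := fun F : Fin 3 → R => (F 0 - 1, F 1 - 1, F 2 - 1)) (by fun_prop) hZ ?_
  rintro _ ⟨g, rfl⟩
  exact ⟨ofConjAct g, by simp [hN, units_smul_def, mul_sub, sub_mul]⟩

theorem conjugation_orbit_closures_intersect_general
    (b α : Fin 3 → Fin 3 → ℝ)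
    (σ τ : Fin 3 → Matrix (Fin 3) (Fin 3) ℝ)
    (hσ : ∀ i, σ i = Matrix.vecMulVec (b i) (α i) - 1)
    (hτ : ∀ i, τ i = Matrix.vecMulVec (fun j => if j = i then 1 else 0)
        (fun j => ∑ k, α i k * b j k) - 1) :
    (closure {x : Matrix (Fin 3) (Fin 3) ℝ × Matrix (Fin 3) (Fin 3) ℝ ×
          Matrix (Fin 3) (Fin 3) ℝ |
        ∃ g : GL (Fin 3) ℝ,
          x = ((g : Matrix (Fin 3) (Fin 3) ℝ) * σ 0 * ((g⁻¹ : GL (Fin 3) ℝ) : Matrix (Fin 3) (Fin 3) ℝ),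
               (g : Matrix (Fin 3) (Fin 3) ℝ) * σ 1 * ((g⁻¹ : GL (Fin 3) ℝ) : Matrix (Fin 3) (Fin 3) ℝ),
               (g : Matrix (Fin 3) (Fin 3) ℝ) * σ 2 * ((g⁻¹ : GL (Fin 3) ℝ) : Matrix (Fin 3) (Fin 3) ℝ))} ∩
      closure {x : Matrix (Fin 3) (Fin 3) ℝ × Matrix (Fin 3) (Fin 3) ℝ ×
          Matrix (Fin 3) (Fin 3) ℝ |
        ∃ g : GL (Fin 3) ℝ,
          x = ((g : Matrix (Fin 3) (Fin 3) ℝ) * τ 0 * ((g⁻¹ : GL (Fin 3) ℝ) : Matrix (Fin 3) (Fin 3) ℝ),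
               (g : Matrix (Fin 3) (Fin 3) ℝ) * τ 1 * ((g⁻¹ : GL (Fin 3) ℝ) : Matrix (Fin 3) (Fin 3) ℝ),
               (g : Matrix (Fin 3) (Fin 3) ℝ) * τ 2 * ((g⁻¹ : GL (Fin 3) ℝ) : Matrix (Fin 3) (Fin 3) ℝ))}).Nonempty := by
  set B : Matrix (Fin 3) (Fin 3) ℝ := Matrix.of fun k j => b j k
  set X : Fin 3 → Matrix (Fin 3) (Fin 3) ℝ :=
    fun i => Matrix.vecMulVec (fun j => if j = i then 1 else 0) (α i)
  have hσX : ∀ i, σ i = B * X i - 1 := fun i => by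
    rw [hσ, Matrix.mul_vecMulVec]
    congr 2
    funext k
    simp [B, Matrix.mulVec, dotProduct]
  have hτX : ∀ i, τ i = X i * B - 1 := fun i => by
    rw [hτ, Matrix.vecMulVec_mul]
    rfl
  obtain ⟨Z, hZσ, hZτ⟩ := B.closure_orbit_mul_inter_closure_orbit_mul_nonempty X
  exact ⟨_, sub_one_mem_closure_conj_triple_of_mem_closure_orbit hσX hZσ,
    sub_one_mem_closure_conj_triple_of_mem_closure_orbit hτX hZτ⟩

/-- For `σᵢ = bᵢ⊗αᵢ − 1` (with `αᵢ(bᵢ) = 2`), let `C = (a i j)` with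
`a i j = αᵢ(b_j)`, and let `τᵢ = eᵢ⊗γᵢ − 1` where `γᵢ` is the `i`-th row of `C`. Then the
closures in `M₃(ℝ)³` of the `GL(3,ℝ)`-conjugation orbits of `(σ₁,σ₂,σ₃)` and `(τ₁,τ₂,τ₃)`
intersect. -/
theorem conjugation_orbit_closures_intersect
    (b α : Fin 3 → Fin 3 → ℝ) (h2 : ∀ i, (∑ k, α i k * b i k) = 2)
    (σ τ : Fin 3 → Matrix (Fin 3) (Fin 3) ℝ)
    (hσ : ∀ i, σ i = Matrix.vecMulVec (b i) (α i) - 1)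
    (hτ : ∀ i, τ i = Matrix.vecMulVec (fun j => if j = i then 1 else 0)
        (fun j => ∑ k, α i k * b j k) - 1) :
    (closure {x : Matrix (Fin 3) (Fin 3) ℝ × Matrix (Fin 3) (Fin 3) ℝ ×
          Matrix (Fin 3) (Fin 3) ℝ |
        ∃ g : GL (Fin 3) ℝ,
          x = ((g : Matrix (Fin 3) (Fin 3) ℝ) * σ 0 * ((g⁻¹ : GL (Fin 3) ℝ) : Matrix (Fin 3) (Fin 3) ℝ),
               (g : Matrix (Fin 3) (Fin 3) ℝ) * σ 1 * ((g⁻¹ : GL (Fin 3) ℝ) : Matrix (Fin 3) (Fin 3) ℝ),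
               (g : Matrix (Fin 3) (Fin 3) ℝ) * σ 2 * ((g⁻¹ : GL (Fin 3) ℝ) : Matrix (Fin 3) (Fin 3) ℝ))} ∩
      closure {x : Matrix (Fin 3) (Fin 3) ℝ × Matrix (Fin 3) (Fin 3) ℝ ×
          Matrix (Fin 3) (Fin 3) ℝ |
        ∃ g : GL (Fin 3) ℝ,
          x = ((g : Matrix (Fin 3) (Fin 3) ℝ) * τ 0 * ((g⁻¹ : GL (Fin 3) ℝ) : Matrix (Fin 3) (Fin 3) ℝ),
               (g : Matrix (Fin 3) (Fin 3) ℝ) * τ 1 * ((g⁻¹ : GL (Fin 3) ℝ) : Matrix (Fin 3) (Fin 3) ℝ),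
               (g : Matrix (Fin 3) (Fin 3) ℝ) * τ 2 * ((g⁻¹ : GL (Fin 3) ℝ) : Matrix (Fin 3) (Fin 3) ℝ))}).Nonempty :=
  conjugation_orbit_closures_intersect_general b α σ τ hσ hτ
end

section
/- Fix integers p₁,p₂,p₃ ≥ 2 and integers q_k with 1 ≤ q_k ≤ p_k/2. (a) If q_k = p_k/2 for some k ∈ {1,2,3}, then any two Cartan matrices of type (q₁,q₂,q₃) with respect to (p₁,p₂,p₃) are equivalent. (b) If q_k < p_k/2 for all k, then, setting c_k = 2cos(q_kπ/p_k), every Cartan matrix A = (a_{ij}) of type (q₁,q₂,q₃) with respect to (p₁,p₂,p₃) is equivalent to the matrix with rows (2, −c₃, −c₂), (−c₃, 2, −t c₁), (−c₂, −t⁻¹c₁, 2) for exactly one nonzero real number t, namely t = −a_{12}a_{23}a_{31}/(c₁c₂c₃). -/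
/-!
Conjugating by `diagonal d` multiplies `a_ij` by `d_i / d_j`, so it preserves the products
`a_ij a_ji = 4 cos² (q_k π / p_k)` and the cyclic product `a_01 a_12 a_20`. If `2 q_k = p_k`, the
pair opposite to `k` vanishes: the graph of the matrix lies in a path, a tree, whose two edges can
be rescaled independently. Otherwise every off-diagonal entry is nonzero, and an explicit
diagonal conjugation reaches the normal form; its parameter `t` is forced by the cyclic product.
-/

open Matrix

/-- Two matrices are equivalent if they are conjugate by an invertible diagonal matrix. -/
def CartanEquiv (A B : Matrix (Fin 3) (Fin 3) ℝ) : Prop :=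
  ∃ d : Fin 3 → ℝ, (∀ i, d i ≠ 0) ∧
    B = Matrix.diagonal d * A * Matrix.diagonal (fun i => (d i)⁻¹)

theorem cartanEquiv_iff {A B : Matrix (Fin 3) (Fin 3) ℝ} :
    CartanEquiv A B ↔
      ∃ d : Fin 3 → ℝ, (∀ i, d i ≠ 0) ∧ ∀ i j, B i j = d i * A i j * (d j)⁻¹ := by
  simp only [CartanEquiv, ← Matrix.ext_iff, Matrix.mul_diagonal, Matrix.diagonal_mul]

theorem CartanEquiv.cyclic_mul_eq {A B : Matrix (Fin 3) (Fin 3) ℝ} (h : CartanEquiv A B)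
    (i j k : Fin 3) : B i j * B j k * B k i = A i j * A j k * A k i := by
  obtain ⟨d, hd, hB⟩ := cartanEquiv_iff.1 h
  rw [hB, hB, hB]
  field_simp [hd i, hd j, hd k]

theorem exists_ne_zero_scale {a b a' b' : ℝ} (hab : a = 0 ↔ b = 0) (hab' : a' = 0 ↔ b' = 0)
    (h : a * b = a' * b') : ∃ d ≠ 0, a' = d * a ∧ b' = b * d⁻¹ := by
  by_cases ha : a = 0
  · have ha'b' : a' * b' = 0 := by rw [← h, ha, zero_mul]
    have hb' : b' = 0 := (mul_eq_zero.1 ha'b').elim hab'.1 id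
    exact ⟨1, one_ne_zero, by rw [hab'.2 hb', ha, mul_zero], by rw [hb', hab.1 ha, zero_mul]⟩
  · have hb : b ≠ 0 := mt hab.2 ha
    have ha' : a' ≠ 0 := fun ha' => mul_ne_zero ha hb (by rw [h, ha', zero_mul])
    refine ⟨a' / a, div_ne_zero ha' ha, by field_simp, ?_⟩
    field_simp
    linear_combination -h

theorem cartanEquiv_of_star {A B : Matrix (Fin 3) (Fin 3) ℝ} (k : Fin 3)
    (hAd : ∀ m, A m m = 2) (hBd : ∀ m, B m m = 2)
    (hA0 : ∀ m n, A m n = 0 ↔ A n m = 0) (hB0 : ∀ m n, B m n = 0 ↔ B n m = 0)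
    (hA : ∀ m n, m ≠ n → m ≠ k → n ≠ k → A m n = 0)
    (hB : ∀ m n, m ≠ n → m ≠ k → n ≠ k → B m n = 0)
    (hprod : ∀ m, A m k * A k m = B m k * B k m) : CartanEquiv A B := by
  choose d hd hdA hdB using fun m => exists_ne_zero_scale (hA0 m k) (hB0 m k) (hprod m)
  have hdk : d k = 1 := by
    have := hdA k
    rw [hAd, hBd] at this
    linarith
  refine cartanEquiv_iff.2 ⟨d, hd, fun m n => ?_⟩
  by_cases hm : m = k
  · rw [hm, hdB n, hdk, one_mul]
  by_cases hn : n = k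
  · rw [hn, hdA m, hdk, inv_one, mul_one]
  by_cases hmn : m = n
  · rw [hmn, hAd, hBd, mul_comm (d n), mul_assoc, mul_inv_cancel₀ (hd n), mul_one]
  · rw [hA m n hmn hm hn, hB m n hmn hm hn, mul_zero, zero_mul]

theorem cos_nat_mul_pi_div_eq_zero {p q : ℕ} (h : 2 * q = p) (hp : p ≠ 0) :
    Real.cos (q * Real.pi / p) = 0 := by
  have hq : (q : ℝ) ≠ 0 := by exact_mod_cast (by omega : q ≠ 0)
  have : q * Real.pi / p = Real.pi / 2 := by
    rw [← h]
    push_cast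
    field_simp
  rw [this, Real.cos_pi_div_two]

theorem cos_nat_mul_pi_div_pos {p q : ℕ} (h : 2 * q < p) : 0 < Real.cos (q * Real.pi / p) := by
  have hp : (0 : ℝ) < p := by exact_mod_cast (by omega : 0 < p)
  have h' : (2 * q : ℝ) < p := by exact_mod_cast h
  have h0 : 0 ≤ q * Real.pi / p := by positivity
  refine Real.cos_pos_of_mem_Ioo ⟨by linarith [Real.pi_pos], ?_⟩
  rw [div_lt_iff₀ hp]
  nlinarith [Real.pi_pos]

namespace IsCartanMatrix

variable {p q : Fin 3 → ℕ} {A B : Matrix (Fin 3) (Fin 3) ℝ}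

theorem apply_eq_zero_comm (hA : IsCartanMatrix p q A) (i j : Fin 3) :
    A i j = 0 ↔ A j i = 0 :=
  ⟨hA.2.2 i j, hA.2.2 j i⟩

theorem mul_apply_eq (hA : IsCartanMatrix p q A) (hB : IsCartanMatrix p q B) (i j : Fin 3) :
    A i j * A j i = B i j * B j i := by
  rcases eq_or_ne i j with rfl | hij
  · rw [hA.1, hB.1]
  · obtain ⟨k, hik, hjk⟩ : ∃ k, i ≠ k ∧ j ≠ k := by revert i j; decide
    rw [hA.2.1 i j k hij hjk hik, hB.2.1 i j k hij hjk hik]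

theorem mul_apply_eq_sq (hA : IsCartanMatrix p q A) {c : Fin 3 → ℝ}
    (hc : ∀ k, c k = 2 * Real.cos ((q k : ℝ) * Real.pi / (p k : ℝ))) {i j k : Fin 3}
    (hij : i ≠ j) (hjk : j ≠ k) (hik : i ≠ k) : A i j * A j i = c k ^ 2 := by
  rw [hA.2.1 i j k hij hjk hik, hc]
  ring

theorem apply_eq_zero (hA : IsCartanMatrix p q A) {k : Fin 3} (hk : 2 * q k = p k)
    (hpk : p k ≠ 0) {i j : Fin 3} (hij : i ≠ j) (hik : i ≠ k) (hjk : j ≠ k) :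
    A i j = 0 := by
  have hprod : A i j * A j i = 0 := by
    rw [hA.2.1 i j k hij hjk hik, cos_nat_mul_pi_div_eq_zero hk hpk]
    norm_num
  exact (mul_eq_zero.1 hprod).elim id (hA.2.2 j i)

theorem cartanEquiv (hA : IsCartanMatrix p q A) (hB : IsCartanMatrix p q B) {k : Fin 3}
    (hk : 2 * q k = p k) (hpk : p k ≠ 0) : CartanEquiv A B :=
  cartanEquiv_of_star k hA.1 hB.1 hA.apply_eq_zero_comm hB.apply_eq_zero_comm
    (fun _ _ hmn hm hn => hA.apply_eq_zero hk hpk hmn hm hn)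
    (fun _ _ hmn hm hn => hB.apply_eq_zero hk hpk hmn hm hn) (fun m => hA.mul_apply_eq hB m k)

end IsCartanMatrix

noncomputable def standardCartan (c : Fin 3 → ℝ) (t : ℝ) : Matrix (Fin 3) (Fin 3) ℝ :=
  !![2, -c 2, -c 1; -c 2, 2, -t * c 0; -c 1, -t⁻¹ * c 0, 2]

theorem cartanEquiv_standardCartan {A : Matrix (Fin 3) (Fin 3) ℝ} {c : Fin 3 → ℝ}
    (hc : ∀ k, c k ≠ 0) (hAd : ∀ i, A i i = 2) (h01 : A 0 1 * A 1 0 = c 2 ^ 2)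
    (h12 : A 1 2 * A 2 1 = c 0 ^ 2) (h20 : A 2 0 * A 0 2 = c 1 ^ 2) :
    CartanEquiv A (standardCartan c (-(A 0 1 * A 1 2 * A 2 0) / (c 0 * c 1 * c 2))) := by
  have hA01 : A 0 1 ≠ 0 := left_ne_zero_of_mul (h01 ▸ pow_ne_zero 2 (hc 2))
  have hA12 : A 1 2 ≠ 0 := left_ne_zero_of_mul (h12 ▸ pow_ne_zero 2 (hc 0))
  have hA20 : A 2 0 ≠ 0 := left_ne_zero_of_mul (h20 ▸ pow_ne_zero 2 (hc 1))
  have hA10 : A 1 0 = c 2 ^ 2 / A 0 1 := by rw [← h01]; field_simp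
  have hA21 : A 2 1 = c 0 ^ 2 / A 1 2 := by rw [← h12]; field_simp
  have hA02 : A 0 2 = c 1 ^ 2 / A 2 0 := by rw [← h20]; field_simp
  refine cartanEquiv_iff.2 ⟨![1, -A 0 1 / c 2, -A 0 2 / c 1], ?_, fun i j => ?_⟩
  · intro i
    fin_cases i <;> simp [hA01, hA02, hA20, hc]
  · fin_cases i <;> fin_cases j <;> simp [standardCartan, hAd, hA10, hA21, hA02] <;>
      field_simp [hc 0, hc 1, hc 2]

theorem eq_of_cartanEquiv_standardCartan {A : Matrix (Fin 3) (Fin 3) ℝ} {c : Fin 3 → ℝ}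
    {t : ℝ} (hc : c 0 * c 1 * c 2 ≠ 0) (h : CartanEquiv A (standardCartan c t)) :
    t = -(A 0 1 * A 1 2 * A 2 0) / (c 0 * c 1 * c 2) := by
  have hcyc := h.cyclic_mul_eq 0 1 2
  simp only [standardCartan, of_apply, cons_val, Fin.isValue] at hcyc
  rw [eq_div_iff hc, ← hcyc]
  ring

theorem cartan_matrix_classification_general
    (p q : Fin 3 → ℕ) (hp : ∀ k, 2 ≤ p k)
    (c : Fin 3 → ℝ) (hc : ∀ k, c k = 2 * Real.cos ((q k : ℝ) * Real.pi / (p k : ℝ))) :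
    ((∃ k, 2 * q k = p k) →
      ∀ A B : Matrix (Fin 3) (Fin 3) ℝ,
        IsCartanMatrix p q A → IsCartanMatrix p q B → CartanEquiv A B) ∧
    ((∀ k, 2 * q k < p k) →
      ∀ A : Matrix (Fin 3) (Fin 3) ℝ, IsCartanMatrix p q A →
        ∀ t₀ : ℝ, t₀ = -(A 0 1 * A 1 2 * A 2 0) / (c 0 * c 1 * c 2) →
          t₀ ≠ 0 ∧
          CartanEquiv A !![2, -c 2, -c 1; -c 2, 2, -t₀ * c 0; -c 1, -t₀⁻¹ * c 0, 2] ∧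
          (∀ t : ℝ, t ≠ 0 →
            CartanEquiv A !![2, -c 2, -c 1; -c 2, 2, -t * c 0; -c 1, -t⁻¹ * c 0, 2] →
            t = t₀)) := by
  refine ⟨fun ⟨k, hk⟩ A B hA hB => hA.cartanEquiv hB hk (zero_lt_two.trans_le (hp k)).ne', ?_⟩
  rintro hlt A hA t₀ rfl
  have hc0 : ∀ k, c k ≠ 0 := fun k => by
    rw [hc k]
    exact mul_ne_zero two_ne_zero (cos_nat_mul_pi_div_pos (hlt k)).ne'
  have hprod : c 0 * c 1 * c 2 ≠ 0 := mul_ne_zero (mul_ne_zero (hc0 0) (hc0 1)) (hc0 2)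
  have h01 := hA.mul_apply_eq_sq hc (i := 0) (j := 1) (k := 2) (by decide) (by decide) (by decide)
  have h12 := hA.mul_apply_eq_sq hc (i := 1) (j := 2) (k := 0) (by decide) (by decide) (by decide)
  have h20 := hA.mul_apply_eq_sq hc (i := 2) (j := 0) (k := 1) (by decide) (by decide) (by decide)
  have hcyc : A 0 1 * A 1 2 * A 2 0 ≠ 0 := mul_ne_zero (mul_ne_zero
    (left_ne_zero_of_mul (h01 ▸ pow_ne_zero 2 (hc0 2)))
    (left_ne_zero_of_mul (h12 ▸ pow_ne_zero 2 (hc0 0))))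
    (left_ne_zero_of_mul (h20 ▸ pow_ne_zero 2 (hc0 1)))
  exact ⟨div_ne_zero (neg_ne_zero.2 hcyc) hprod, cartanEquiv_standardCartan hc0 hA.1 h01 h12 h20,
    fun t _ h => eq_of_cartanEquiv_standardCartan hprod h⟩

/-- (a) If `q_k = p_k/2` for some `k`, any two Cartan matrices of type
`(q₁,q₂,q₃)` w.r.t. `(p₁,p₂,p₃)` are equivalent. (b) If `q_k < p_k/2` for all `k`, then
with `c_k = 2cos(q_kπ/p_k)` every Cartan matrix of this type is equivalent to the standard
matrix with parameter `t` for exactly one nonzero `t`, namely `t = −a₁₂a₂₃a₃₁/(c₁c₂c₃)`. -/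
theorem cartan_matrix_classification
    (p q : Fin 3 → ℕ) (hp : ∀ k, 2 ≤ p k) (hq : ∀ k, 1 ≤ q k ∧ 2 * q k ≤ p k)
    (c : Fin 3 → ℝ) (hc : ∀ k, c k = 2 * Real.cos ((q k : ℝ) * Real.pi / (p k : ℝ))) :
    ((∃ k, 2 * q k = p k) →
      ∀ A B : Matrix (Fin 3) (Fin 3) ℝ,
        IsCartanMatrix p q A → IsCartanMatrix p q B → CartanEquiv A B) ∧
    ((∀ k, 2 * q k < p k) →
      ∀ A : Matrix (Fin 3) (Fin 3) ℝ, IsCartanMatrix p q A →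
        ∀ t₀ : ℝ, t₀ = -(A 0 1 * A 1 2 * A 2 0) / (c 0 * c 1 * c 2) →
          t₀ ≠ 0 ∧
          CartanEquiv A !![2, -c 2, -c 1; -c 2, 2, -t₀ * c 0; -c 1, -t₀⁻¹ * c 0, 2] ∧
          (∀ t : ℝ, t ≠ 0 →
            CartanEquiv A !![2, -c 2, -c 1; -c 2, 2, -t * c 0; -c 1, -t⁻¹ * c 0, 2] →
            t = t₀)) :=
  cartan_matrix_classification_general p q hp c hc
end

section
/- Let p₁,p₂,p₃ be odd integers with p_k ≥ 3 and 1/p₁ + 1/p₂ + 1/p₃ < 1, and c_k = 2cos((p_k−1)π/(2p_k)). Then 0 < c_k ≤ 1 for each k, c₁² + c₂² + c₃² + c₁c₂c₃ ≤ 3, and c₁c₂c₃ < c₁² + c₂² + c₃². Equivalently, setting u_± = 3 − c₁² − c₂² − c₃² ± c₁c₂c₃, one has 0 ≤ u₋ < u₊ < 3. -/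
open Real

lemma sin_pi_div_ten' : Real.sin (π/10) = (Real.sqrt 5 - 1)/4 := by
  have h5 : Real.sqrt 5 ^ 2 = 5 := Real.sq_sqrt (by norm_num)
  have h5' : (2:ℝ) ≤ Real.sqrt 5 := by nlinarith [Real.sqrt_nonneg 5]
  have hc : Real.cos (π/5) = (1 + Real.sqrt 5)/4 := Real.cos_pi_div_five
  have hdm : Real.cos (π/5) = 1 - 2 * Real.sin (π/10) ^ 2 := by
    have : (π/5 : ℝ) = 2 * (π/10) := by ring
    rw [this, Real.cos_two_mul']
    nlinarith [Real.sin_sq_add_cos_sq (π/10)]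
  have hsq : Real.sin (π/10) ^ 2 = (3 - Real.sqrt 5)/8 := by linarith [hc ▸ hdm]
  have hpos : 0 ≤ Real.sin (π/10) := Real.sin_nonneg_of_nonneg_of_le_pi
    (by positivity) (by nlinarith [Real.pi_pos])
  nlinarith [sq_nonneg (Real.sin (π/10) - (Real.sqrt 5 - 1)/4)]

/-- For odd `p₁,p₂,p₃ ≥ 3` with `1/p₁ + 1/p₂ + 1/p₃ < 1` and
`c_k = 2cos((p_k−1)π/(2p_k))`, one has `0 < c_k ≤ 1`, `c₁² + c₂² + c₃² + c₁c₂c₃ ≤ 3`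
and `c₁c₂c₃ < c₁² + c₂² + c₃²`; equivalently, with
`u_± = 3 − c₁² − c₂² − c₃² ± c₁c₂c₃`, one has `0 ≤ u₋ < u₊ < 3`. -/
theorem triangle_cosine_inequalities
    (p : Fin 3 → ℕ) (hodd : ∀ k, Odd (p k)) (hp3 : ∀ k, 3 ≤ p k)
    (hhyp : (1 : ℝ) / (p 0 : ℝ) + 1 / (p 1 : ℝ) + 1 / (p 2 : ℝ) < 1)
    (c : Fin 3 → ℝ)
    (hc : ∀ k, c k = 2 * Real.cos (((p k : ℝ) - 1) * Real.pi / (2 * (p k : ℝ)))) :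
    (∀ k, 0 < c k ∧ c k ≤ 1) ∧
    c 0 ^ 2 + c 1 ^ 2 + c 2 ^ 2 + c 0 * c 1 * c 2 ≤ 3 ∧
    c 0 * c 1 * c 2 < c 0 ^ 2 + c 1 ^ 2 + c 2 ^ 2 ∧
    (∀ um up : ℝ,
      um = 3 - c 0 ^ 2 - c 1 ^ 2 - c 2 ^ 2 - c 0 * c 1 * c 2 →
      up = 3 - c 0 ^ 2 - c 1 ^ 2 - c 2 ^ 2 + c 0 * c 1 * c 2 →
      0 ≤ um ∧ um < up ∧ up < 3) := by
  have pi_pos := Real.pi_pos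
  -- rewrite c as 2 sin
  have hsin : ∀ k, c k = 2 * Real.sin (π / (2 * (p k : ℝ))) := by
    intro k
    have hpk : (0:ℝ) < (p k : ℝ) := by
      have := hp3 k; exact_mod_cast Nat.lt_of_lt_of_le (by norm_num) this
    have hang : ((p k : ℝ) - 1) * π / (2 * (p k : ℝ)) = π/2 - π / (2 * (p k : ℝ)) := by
      field_simp
    rw [hc k, hang, Real.cos_pi_div_two_sub]
  -- positivity and ≤ 1
  have hbnd : ∀ k, 0 < c k ∧ c k ≤ 1 := by
    intro k
    have hpk : (3:ℝ) ≤ (p k : ℝ) := by exact_mod_cast hp3 k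
    have h1 : 0 < π / (2 * (p k : ℝ)) := by positivity
    have h2 : π / (2 * (p k : ℝ)) ≤ π / 6 := by
      apply div_le_div_of_nonneg_left pi_pos.le (by norm_num) (by linarith)
    have hle : Real.sin (π / (2 * (p k : ℝ))) ≤ 1/2 := by
      calc Real.sin (π / (2 * (p k : ℝ))) ≤ Real.sin (π/6) :=
            Real.sin_le_sin_of_le_of_le_pi_div_two (by linarith) (by linarith) h2
        _ = 1/2 := Real.sin_pi_div_six
    have hpos : 0 < Real.sin (π / (2 * (p k : ℝ))) :=
      Real.sin_pos_of_pos_of_lt_pi h1 (by nlinarith)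
    rw [hsin k]; constructor <;> linarith
  refine ⟨hbnd, ?_⟩
  -- some p k ≥ 5
  have hex : ∃ k : Fin 3, 5 ≤ p k := by
    by_contra h
    push_neg at h
    have h3 : ∀ k, p k = 3 := by
      intro k
      obtain ⟨m, hm⟩ := hodd k
      have := hp3 k; have := h k; omega
    rw [h3 0, h3 1, h3 2] at hhyp
    norm_num at hhyp
  obtain ⟨k, hk⟩ := hex
  -- for that k, c k ≤ (√5 - 1)/2
  have h5 : Real.sqrt 5 ^ 2 = 5 := Real.sq_sqrt (by norm_num)
  have h5' : (2:ℝ) ≤ Real.sqrt 5 := by nlinarith [Real.sqrt_nonneg 5]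
  have hkg : c k ≤ (Real.sqrt 5 - 1)/2 := by
    have hpk : (5:ℝ) ≤ (p k : ℝ) := by exact_mod_cast hk
    have h2 : π / (2 * (p k : ℝ)) ≤ π / 10 := by
      apply div_le_div_of_nonneg_left pi_pos.le (by norm_num) (by linarith)
    have h0 : (0:ℝ) ≤ π / (2 * (p k : ℝ)) := by positivity
    have hle : Real.sin (π / (2 * (p k : ℝ))) ≤ (Real.sqrt 5 - 1)/4 := by
      calc Real.sin (π / (2 * (p k : ℝ))) ≤ Real.sin (π/10) :=
            Real.sin_le_sin_of_le_of_le_pi_div_two (by linarith) (by linarith) h2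
        _ = (Real.sqrt 5 - 1)/4 := sin_pi_div_ten'
    rw [hsin k]; linarith
  obtain ⟨hc0, hc0'⟩ := hbnd 0
  obtain ⟨hc1, hc1'⟩ := hbnd 1
  obtain ⟨hc2, hc2'⟩ := hbnd 2
  have key : c 0 ^ 2 + c 1 ^ 2 + c 2 ^ 2 + c 0 * c 1 * c 2 ≤ 3 := by
    fin_cases k <;> simp only [Fin.zero_eta, Fin.mk_one, Fin.isValue, Fin.reduceFinMk, show (⟨2, by omega⟩ : Fin 3) = 2 from rfl] at hkg <;>
      nlinarith [mul_pos hc0 hc1, mul_pos hc1 hc2, mul_pos hc0 hc2,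
        mul_nonneg (mul_nonneg hc0.le hc1.le) hc2.le]
  have key2 : c 0 * c 1 * c 2 < c 0 ^ 2 + c 1 ^ 2 + c 2 ^ 2 := by
    nlinarith [sq_nonneg (c 0 - c 1), mul_pos hc0 hc1, sq_nonneg (c 2)]
  have key3 : 0 < c 0 * c 1 * c 2 := by positivity
  exact ⟨key, key2, fun um up hum hup => by subst hum hup; refine ⟨by linarith, by linarith, by linarith⟩⟩
end

section
/- Let X be a topological space, h : X → X a continuous map, and z, x₊ ∈ X points such that the sequence hⁿ(z) converges to x₊. Let g ∈ SL(3,ℝ) have three real eigenvalues of pairwise distinct absolute values, let v₊ ∈ ℝ³ be an eigenvector for the eigenvalue of largest absolute value, and let P₋ ⊆ ℝ³ be the plane spanned by eigenvectors of the other two eigenvalues. If ξ : X → ℝP² is a continuous map satisfying ξ(h(x)) = g·ξ(x) for all x ∈ X and ξ(x₊) = [v₊], then ξ(z) does not lie in the projectivization of P₋ (i.e. ξ(z) ≠ [w] for every nonzero w ∈ P₋). -/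
/-!
Let `W` be the sum of the `λ₁`- and `λ₂`-eigenspaces of `g`; it contains `P₋`, so `ℙ(W)` is a
closed `g`-invariant subset of `ℝP²`. If `ξ z ∈ ℙ(W)`, equivariance keeps `ξ (hⁿ z) = gⁿ · ξ z`
in `ℙ(W)`, hence also the limit `ξ x₊ = [v₊]`. But `v₊` lies in the `λ₀`-eigenspace, which meets `W`
trivially because `λ₀ ≠ λ₁, λ₂`.
-/

open Matrix Polynomial Filter

noncomputable instance projectivizationTopology (K V : Type*) [DivisionRing K] [AddCommGroup V]
    [Module K V] [TopologicalSpace V] : TopologicalSpace (Projectivization K V) :=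
  instTopologicalSpaceQuotient

/-- The action of `GL(n,ℝ)` on the projectivization of `ℝⁿ`, `g·[v] = [gv]`. -/
noncomputable def projActGL {n : ℕ} (g : GL (Fin n) ℝ) :
    Projectivization ℝ (Fin n → ℝ) → Projectivization ℝ (Fin n → ℝ) :=
  Projectivization.map (Matrix.GeneralLinearGroup.toLin g).toLinearEquiv.toLinearMap
    (Matrix.GeneralLinearGroup.toLin g).toLinearEquiv.injective

/-- The action of `SL(3,ℝ)` on the real projective plane `ℝP²`. -/
noncomputable def projActSL (g : Matrix.SpecialLinearGroup (Fin 3) ℝ) :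
    Projectivization ℝ (Fin 3 → ℝ) → Projectivization ℝ (Fin 3 → ℝ) :=
  projActGL (Matrix.SpecialLinearGroup.toGL g)

namespace Projectivization

variable {K V : Type*} [DivisionRing K] [AddCommGroup V] [Module K V]

theorem mk_mem_setOf_submodule_le {W : Submodule K V} {v : V} (hv : v ≠ 0) :
    mk K v hv ∈ {p : Projectivization K V | p.submodule ≤ W} ↔ v ∈ W := by
  rw [Set.mem_ofPred_eq, submodule_mk, Submodule.span_singleton_le_iff_mem]

theorem isClosed_setOf_submodule_le [TopologicalSpace V] {W : Submodule K V}
    (hW : IsClosed (W : Set V)) : IsClosed {p : Projectivization K V | p.submodule ≤ W} := by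
  have hq : Topology.IsQuotientMap (mk' K : {v : V // v ≠ 0} → Projectivization K V) :=
    isQuotientMap_quot_mk
  rw [← hq.isClosed_preimage]
  convert hW.preimage continuous_subtype_val using 1
  ext ⟨v, hv⟩
  exact mk_mem_setOf_submodule_le hv

theorem mapsTo_map_setOf_submodule_le {L V' : Type*} [DivisionRing L] [AddCommGroup V']
    [Module L V'] {σ : K →+* L} {f : V →ₛₗ[σ] V'} (hf : Function.Injective f)
    {W : Submodule K V} {W' : Submodule L V'} (hfW : Set.MapsTo f W W') :
    Set.MapsTo (map f hf) {p | p.submodule ≤ W} {p | p.submodule ≤ W'} := by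
  refine ind fun v hv hvW => ?_
  rw [map_mk, mk_mem_setOf_submodule_le]
  exact hfW ((mk_mem_setOf_submodule_le hv).1 hvW)

end Projectivization

namespace Module.End

variable {R M : Type*} [CommRing R] [AddCommGroup M] [Module R M]

theorem mapsTo_eigenspace_sup_eigenspace (f : End R M) (μ₁ μ₂ : R) :
    Set.MapsTo f (f.eigenspace μ₁ ⊔ f.eigenspace μ₂ : Submodule R M)
      (f.eigenspace μ₁ ⊔ f.eigenspace μ₂ : Submodule R M) := by
  have hinv (μ : R) : f.eigenspace μ ≤ (f.eigenspace μ).comap f := fun x hx => by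
    rw [Submodule.mem_comap, mem_eigenspace_iff.1 hx]
    exact Submodule.smul_mem _ _ hx
  exact sup_le ((hinv μ₁).trans (Submodule.comap_mono le_sup_left))
    ((hinv μ₂).trans (Submodule.comap_mono le_sup_right))

theorem disjoint_eigenspace_sup_eigenspace [IsDomain R] [IsTorsionFree R M] (f : End R M)
    {μ μ₁ μ₂ : R} (h₁ : μ₁ ≠ μ) (h₂ : μ₂ ≠ μ) :
    Disjoint (f.eigenspace μ) (f.eigenspace μ₁ ⊔ f.eigenspace μ₂) :=
  (f.eigenspaces_iSupIndep μ).mono_right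
    (sup_le (le_iSup₂_of_le μ₁ h₁ le_rfl) (le_iSup₂_of_le μ₂ h₂ le_rfl))

end Module.End

theorem Function.Semiconj.mem_of_tendsto_iterate {X Y : Type*} [TopologicalSpace X]
    [TopologicalSpace Y] {ξ : X → Y} {h : X → X} {T : Y → Y} (hsemi : Function.Semiconj ξ h T)
    (hξ : Continuous ξ) {C : Set Y} (hC : IsClosed C) (hT : Set.MapsTo T C C) {z x : X}
    (hlim : Tendsto (fun n => h^[n] z) atTop (nhds x)) (hz : ξ z ∈ C) : ξ x ∈ C :=
  hC.mem_of_tendsto ((hξ.tendsto x).comp hlim) <| Eventually.of_forall fun n => by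
    simpa only [Function.comp_apply, (hsemi.iterate_right n).eq] using hT.iterate n hz

theorem projActGL_eq_map {n : ℕ} (g : GL (Fin n) ℝ) :
    projActGL g = Projectivization.map (Matrix.toLin' (g : Matrix (Fin n) (Fin n) ℝ))
      (Matrix.GeneralLinearGroup.toLin g).toLinearEquiv.injective :=
  rfl

theorem image_avoids_repelling_line_general
    {S : Type*} [TopologicalSpace S] (h : S → S)
    (z xplus : S) (hlim : Tendsto (fun n => h^[n] z) atTop (nhds xplus))
    (g : Matrix.SpecialLinearGroup (Fin 3) ℝ) (lam : Fin 3 → ℝ)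
    (habs1 : |lam 1| < |lam 0|) (habs2 : |lam 2| < |lam 0|)
    (vplus : Fin 3 → ℝ) (hvplus : vplus ≠ 0)
    (hev : (g : Matrix (Fin 3) (Fin 3) ℝ).mulVec vplus = lam 0 • vplus)
    (v₁ v₂ : Fin 3 → ℝ)
    (hev₁ : (g : Matrix (Fin 3) (Fin 3) ℝ).mulVec v₁ = lam 1 • v₁)
    (hev₂ : (g : Matrix (Fin 3) (Fin 3) ℝ).mulVec v₂ = lam 2 • v₂)
    (Pminus : Submodule ℝ (Fin 3 → ℝ)) (hPminus : Pminus = Submodule.span ℝ {v₁, v₂})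
    (ξ : S → Projectivization ℝ (Fin 3 → ℝ)) (hξ : Continuous ξ)
    (hequiv : ∀ x, ξ (h x) = projActSL g (ξ x))
    (hfix : ξ xplus = Projectivization.mk ℝ vplus hvplus) :
    ∀ w : Fin 3 → ℝ, ∀ hw : w ≠ 0, w ∈ Pminus → ξ z ≠ Projectivization.mk ℝ w hw := by
  intro w hw hwP hz
  set f : Module.End ℝ (Fin 3 → ℝ) := Matrix.toLin' (g : Matrix (Fin 3) (Fin 3) ℝ)
  set W := f.eigenspace (lam 1) ⊔ f.eigenspace (lam 2)
  have hPW : Pminus ≤ W := hPminus ▸ Submodule.span_le.2 (Set.insert_subset_iff.2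
    ⟨Submodule.mem_sup_left (Module.End.mem_eigenspace_iff.2 hev₁),
      Set.singleton_subset_iff.2 (Submodule.mem_sup_right (Module.End.mem_eigenspace_iff.2 hev₂))⟩)
  have hplusW : ξ xplus ∈ {p | p.submodule ≤ W} := by
    refine Function.Semiconj.mem_of_tendsto_iterate hequiv hξ
      (Projectivization.isClosed_setOf_submodule_le W.closed_of_finiteDimensional) ?_ hlim ?_
    · rw [projActSL, projActGL_eq_map]
      exact Projectivization.mapsTo_map_setOf_submodule_le _
        (f.mapsTo_eigenspace_sup_eigenspace _ _)
    · rw [hz, Projectivization.mk_mem_setOf_submodule_le]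
      exact hPW hwP
  rw [hfix, Projectivization.mk_mem_setOf_submodule_le] at hplusW
  have hne₁ : lam 1 ≠ lam 0 := fun he => habs1.ne (congrArg abs he)
  have hne₂ : lam 2 ≠ lam 0 := fun he => habs2.ne (congrArg abs he)
  exact hvplus <| Submodule.disjoint_def.1 (f.disjoint_eigenspace_sup_eigenspace hne₁ hne₂) vplus
    (Module.End.mem_eigenspace_iff.2 hev) hplusW

/-- If `hⁿ(z) → x₊` in `S`, `g ∈ SL(3,ℝ)` has three real eigenvalues of
pairwise distinct absolute values, `v₊` is a top eigenvector and `P₋` the span of the two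
remaining eigenvectors, then any continuous map `ξ : S → ℝP²` with `ξ∘h = g·ξ` and
`ξ(x₊) = [v₊]` satisfies `ξ(z) ∉ ℙ(P₋)`. -/
theorem image_avoids_repelling_line
    {S : Type*} [TopologicalSpace S] (h : S → S) (hcont : Continuous h)
    (z xplus : S) (hlim : Tendsto (fun n => h^[n] z) atTop (nhds xplus))
    (g : Matrix.SpecialLinearGroup (Fin 3) ℝ) (lam : Fin 3 → ℝ)
    (hchar : (g : Matrix (Fin 3) (Fin 3) ℝ).charpoly =
      (X - C (lam 0)) * (X - C (lam 1)) * (X - C (lam 2)))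
    (habs1 : |lam 1| < |lam 0|) (habs2 : |lam 2| < |lam 0|) (habs3 : |lam 1| ≠ |lam 2|)
    (vplus : Fin 3 → ℝ) (hvplus : vplus ≠ 0)
    (hev : (g : Matrix (Fin 3) (Fin 3) ℝ).mulVec vplus = lam 0 • vplus)
    (v₁ v₂ : Fin 3 → ℝ) (hv₁ : v₁ ≠ 0) (hv₂ : v₂ ≠ 0)
    (hev₁ : (g : Matrix (Fin 3) (Fin 3) ℝ).mulVec v₁ = lam 1 • v₁)
    (hev₂ : (g : Matrix (Fin 3) (Fin 3) ℝ).mulVec v₂ = lam 2 • v₂)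
    (Pminus : Submodule ℝ (Fin 3 → ℝ)) (hPminus : Pminus = Submodule.span ℝ {v₁, v₂})
    (ξ : S → Projectivization ℝ (Fin 3 → ℝ)) (hξ : Continuous ξ)
    (hequiv : ∀ x, ξ (h x) = projActSL g (ξ x))
    (hfix : ξ xplus = Projectivization.mk ℝ vplus hvplus) :
    ∀ w : Fin 3 → ℝ, ∀ hw : w ≠ 0, w ∈ Pminus → ξ z ≠ Projectivization.mk ℝ w hw :=
  image_avoids_repelling_line_general h z xplus hlim g lam habs1 habs2 vplus hvplus hev v₁ v₂ hev₁
    hev₂ Pminus hPminus ξ hξ hequiv hfix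
end
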